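/- arXiv:2302.03005 — 7 statements merged into one kernel-verified Lean document; each statement's English description precedes it below -/
import Mathlib

section
/- Let n ∈ [1,3) and α = 4/(n+3), and suppose that for every D ≥ 0 the pair (B_D, H_D) is a solution of the self-similar problem (ss-new) with parameter D. Then D · B_D^α → 3 as D → +∞, and H_D converges uniformly on [0,1] to the parabolic profile x ↦ (3/2)(1 − x²) as D → +∞. -/
/-- First derivative within `[0,1)`. -/
noncomputable def dIco (f : ℝ → ℝ) : ℝ → ℝ := derivWithin f (Set.Ico 0 1)

/-- Third derivative within `[0,1)`. -/
noncomputable def d3Ico (f : ℝ → ℝ) : ℝ → ℝ := dIco (dIco (dIco f))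

/-- `(B, H)` is a solution of the self-similar problem (ss-new) with mobility exponent `n`
and contact-line friction coefficient `D` (here `α = 4/(n+3)`). -/
def IsSSNew (n D B : ℝ) (H : ℝ → ℝ) : Prop :=
  0 < B ∧
  ContinuousOn H (Set.Icc 0 1) ∧
  (∀ x ∈ Set.Ico (0:ℝ) 1, 0 < H x) ∧
  ContDiffOn ℝ 3 H (Set.Ico 0 1) ∧
  (∀ x ∈ Set.Ioo (0:ℝ) 1, H x ^ (n - 1) * d3Ico H x = B ^ 2 * x) ∧
  dIco H 0 = 0 ∧
  H 1 = 0 ∧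
  Filter.Tendsto (fun x => (dIco H x) ^ 2) (nhdsWithin 1 (Set.Iio 1))
    (nhds (D ^ 2 * B ^ (2 * (4 / (n + 3))))) ∧
  (∫ x in (0:ℝ)..1, H x) = 1

/-!
Write `E = D B^α`. Since `H''' = B² x / H^(n-1) > 0`, the slope `H'` is convex on `[0, 1)`
with `H'(0) = 0` and `H'(x) → -E` as `x → 1⁻` (the sign because `H > 0 = H(1)`), so
`H' ≤ -E x` and `H ≥ E (1 - x²) / 2`. Fed back into the equation, this lower bound gives
`(1 - x) H''' ≤ B² (E/2)^(1-n) (1 - x)^(2-n)`, an integrable function since `n < 3`; its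
integral `K` bounds the Green's-function term in the representation of `H'` on `[0, y]`, whence
`H' ≥ -E x - K` and `H ≤ E (1 - x²) / 2 + K (1 - x)`. Integrating against `∫ H = 1` squeezes
`E` between `3 - 3K/2` and `3`, and `|H - (3/2)(1 - x²)| ≤ K`. Finally
`K = 2^(n-1) / (3-n) · E^((5-n)/2) · D^(-(n+3)/2)`, which tends to `0` as `D → ∞` because
`E ≤ 3`.
-/

open Set Filter Topology MeasureTheory intervalIntegral

theorem integral_nonneg_of_Ioo {g : ℝ → ℝ} {p q : ℝ} (hpq : p ≤ q)
    (hg : IntervalIntegrable g volume p q) (h : ∀ t ∈ Ioo p q, 0 ≤ g t) :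
    0 ≤ ∫ t in p..q, g t := by
  simpa using integral_mono_on_of_le_Ioo hpq intervalIntegrable_const hg h

section GreenFormula

variable {f f' f'' : ℝ → ℝ} {a x b : ℝ}

theorem integral_sub_mul_deriv2 {p q : ℝ} (c : ℝ) (hpq : p ≤ q)
    (hf : ContinuousOn f (Icc p q)) (hf' : ContinuousOn f' (Icc p q))
    (hf'' : ContinuousOn f'' (Icc p q)) (hd : ∀ t ∈ Ioo p q, HasDerivAt f (f' t) t)
    (hd' : ∀ t ∈ Ioo p q, HasDerivAt f' (f'' t) t) :
    ∫ t in p..q, (t - c) * f'' t = (q - c) * f' q - f q - ((p - c) * f' p - f p) :=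
  integral_eq_sub_of_hasDerivAt_of_le hpq
    (((continuousOn_id.sub continuousOn_const).mul hf').sub hf)
    (fun t ht => ((((hasDerivAt_id t).sub_const c).mul (hd' t ht)).sub (hd t ht)).congr_deriv
      (by simp only [id_eq]; ring))
    (((continuousOn_id.sub continuousOn_const).mul hf'').intervalIntegrable_of_Icc hpq)

variable (hax : a ≤ x) (hxb : x ≤ b) (hf : ContinuousOn f (Icc a b))
    (hf' : ContinuousOn f' (Icc a b)) (hf'' : ContinuousOn f'' (Icc a b))
    (hd : ∀ t ∈ Ioo a b, HasDerivAt f (f' t) t)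
    (hd' : ∀ t ∈ Ioo a b, HasDerivAt f' (f'' t) t)
include hax hxb hf hf' hf'' hd hd'

theorem mul_eq_chord_sub_green :
    (b - a) * f x = (b - x) * f a + (x - a) * f b -
      ((b - x) * (∫ t in a..x, (t - a) * f'' t) + (x - a) * ∫ t in x..b, (b - t) * f'' t) := by
  have hleft := integral_sub_mul_deriv2 a hax (hf.mono (Icc_subset_Icc_right hxb))
    (hf'.mono (Icc_subset_Icc_right hxb)) (hf''.mono (Icc_subset_Icc_right hxb))
    (fun t ht => hd t (Ioo_subset_Ioo_right hxb ht))
    (fun t ht => hd' t (Ioo_subset_Ioo_right hxb ht))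
  have hright := integral_sub_mul_deriv2 b hxb (hf.mono (Icc_subset_Icc_left hax))
    (hf'.mono (Icc_subset_Icc_left hax)) (hf''.mono (Icc_subset_Icc_left hax))
    (fun t ht => hd t (Ioo_subset_Ioo_left hax ht))
    (fun t ht => hd' t (Ioo_subset_Ioo_left hax ht))
  have hneg : ∫ t in x..b, (b - t) * f'' t = -∫ t in x..b, (t - b) * f'' t := by
    rw [← intervalIntegral.integral_neg]; congr 1; ext t; ring
  rw [hleft, hneg, hright]
  ring

theorem mul_le_chord_of_deriv2_nonneg (h2 : ∀ t ∈ Ioo a b, 0 ≤ f'' t) :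
    (b - a) * f x ≤ (b - x) * f a + (x - a) * f b := by
  have hl : 0 ≤ ∫ t in a..x, (t - a) * f'' t :=
    integral_nonneg_of_Ioo hax (((continuousOn_id.sub continuousOn_const).mul
        (hf''.mono (Icc_subset_Icc_right hxb))).intervalIntegrable_of_Icc hax)
      fun t ht => mul_nonneg (sub_nonneg.2 ht.1.le) (h2 t ⟨ht.1, ht.2.trans_le hxb⟩)
  have hr : 0 ≤ ∫ t in x..b, (b - t) * f'' t :=
    integral_nonneg_of_Ioo hxb (((continuousOn_const.sub continuousOn_id).mul
        (hf''.mono (Icc_subset_Icc_left hax))).intervalIntegrable_of_Icc hxb)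
      fun t ht => mul_nonneg (sub_nonneg.2 ht.2.le) (h2 t ⟨hax.trans_lt ht.1, ht.2⟩)
  rw [mul_eq_chord_sub_green hax hxb hf hf' hf'' hd hd']
  nlinarith [sub_nonneg.2 hax, sub_nonneg.2 hxb]

theorem chord_sub_le_mul_of_deriv2_nonneg (h2 : ∀ t ∈ Ioo a b, 0 ≤ f'' t) :
    (b - x) * f a + (x - a) * f b - (b - a) * ∫ t in a..b, (b - t) * f'' t ≤ (b - a) * f x := by
  have hint : ∀ p q, a ≤ p → q ≤ b → p ≤ q →
      IntervalIntegrable (fun t => (b - t) * f'' t) volume p q := fun p q hp hq hpq =>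
    ((continuousOn_const.sub continuousOn_id).mul
      (hf''.mono (Icc_subset_Icc hp hq))).intervalIntegrable_of_Icc hpq
  have hl : (b - x) * ∫ t in a..x, (t - a) * f'' t ≤
      (b - a) * ∫ t in a..x, (b - t) * f'' t := by
    rw [← intervalIntegral.integral_const_mul, ← intervalIntegral.integral_const_mul]
    refine integral_mono_on_of_le_Ioo hax ?_ ?_ fun t ht => ?_
    · exact (((continuousOn_id.sub continuousOn_const).mul
        (hf''.mono (Icc_subset_Icc_right hxb))).intervalIntegrable_of_Icc hax).const_mul _
    · exact (hint a x le_rfl hxb hax).const_mul _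
    · have hweight : (b - x) * (t - a) ≤ (b - a) * (b - t) := by nlinarith [ht.1, ht.2]
      have := mul_le_mul_of_nonneg_right hweight (h2 t ⟨ht.1, ht.2.trans_le hxb⟩)
      linarith
  have hr : 0 ≤ ∫ t in x..b, (b - t) * f'' t :=
    integral_nonneg_of_Ioo hxb (hint x b hax le_rfl hxb)
      fun t ht => mul_nonneg (sub_nonneg.2 ht.2.le) (h2 t ⟨hax.trans_lt ht.1, ht.2⟩)
  rw [mul_eq_chord_sub_green hax hxb hf hf' hf'' hd hd',
    ← integral_add_adjacent_intervals (hint a x le_rfl hxb hax) (hint x b hax le_rfl hxb)]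
  nlinarith [sub_nonneg.2 hax, sub_nonneg.2 hxb]

end GreenFormula

theorem le_of_deriv_le_of_le_right {f g f' g' : ℝ → ℝ} {a b : ℝ} (hab : a ≤ b)
    (hf : ContinuousOn f (Icc a b)) (hg : ContinuousOn g (Icc a b))
    (hf' : ∀ t ∈ Ioo a b, HasDerivAt f (f' t) t) (hg' : ∀ t ∈ Ioo a b, HasDerivAt g (g' t) t)
    (hle : ∀ t ∈ Ioo a b, g' t ≤ f' t) (hb : f b ≤ g b) {x : ℝ} (hx : x ∈ Icc a b) :
    f x ≤ g x := by
  have hmono : MonotoneOn (fun t => f t - g t) (Icc a b) := by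
    refine monotoneOn_of_hasDerivWithinAt_nonneg (f' := fun t => f' t - g' t)
      (convex_Icc a b) (hf.sub hg) (fun t ht => ?_) fun t ht => ?_
    · rw [interior_Icc] at ht
      exact ((hf' t ht).sub (hg' t ht)).hasDerivWithinAt
    · rw [interior_Icc] at ht
      exact sub_nonneg.2 (hle t ht)
  have := hmono hx (right_mem_Icc.2 hab) hx.2
  simp only at this
  linarith

theorem tendsto_neg_of_tendsto_sq {f f' : ℝ → ℝ} {a b L : ℝ} (hab : a < b)
    (hf : ContinuousOn f (Icc a b)) (hfb : f b = 0) (hpos : ∀ x ∈ Ico a b, 0 < f x)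
    (hd : ∀ x ∈ Ioo a b, HasDerivAt f (f' x) x) (hf' : ContinuousOn f' (Ioo a b)) (hL : 0 < L)
    (hsq : Tendsto (fun x => f' x ^ 2) (𝓝[<] b) (𝓝 (L ^ 2))) :
    Tendsto f' (𝓝[<] b) (𝓝 (-L)) := by
  obtain ⟨c, hcb, hc⟩ := mem_nhdsLT_iff_exists_Ioo_subset.1
    (hsq.eventually (eventually_gt_nhds (pow_pos hL 2)))
  set S := Ioo (max a c) b
  have hSsub : S ⊆ Ioo a b := Ioo_subset_Ioo_left (le_max_left a c)
  have hne : ∀ y ∈ S, f' y ≠ 0 := fun y hy h0 => by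
    have : (0 : ℝ) < f' y ^ 2 := hc (Ioo_subset_Ioo_left (le_max_right a c) hy)
    simp [h0] at this
  have hneg_near : ∀ y ∈ S, ∃ z ∈ S, f' z < 0 := fun y hy => by
    obtain ⟨z, hz, hslope⟩ := exists_hasDerivAt_eq_slope f f' hy.2
      (hf.mono (Icc_subset_Icc (hSsub hy).1.le le_rfl))
      (fun t ht => hd t ⟨(hSsub hy).1.trans ht.1, ht.2⟩)
    refine ⟨z, ⟨hy.1.trans hz.1, hz.2⟩, ?_⟩
    rw [hslope, hfb, zero_sub, neg_div]
    exact neg_neg_of_pos (div_pos (hpos y (Ioo_subset_Ico_self (hSsub hy))) (sub_pos.2 hy.2))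
  have hneg : ∀ y ∈ S, f' y < 0 := fun y hy => by
    by_contra hy0
    obtain ⟨z, hz, hz0⟩ := hneg_near y hy
    obtain ⟨w, hw, hw0⟩ := isPreconnected_Ioo.intermediate_value hz hy (hf'.mono hSsub)
      ⟨hz0.le, not_lt.1 hy0⟩
    exact hne w hw hw0
  have habs : Tendsto (fun x => |f' x|) (𝓝[<] b) (𝓝 L) := by
    simpa [Real.sqrt_sq_eq_abs, Real.sqrt_sq hL.le] using hsq.sqrt
  refine habs.neg.congr' ?_
  filter_upwards [Ioo_mem_nhdsLT (max_lt hab hcb)] with y hy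
  rw [abs_of_neg (hneg y hy), neg_neg]

theorem tendsto_mul_nhdsLT_one (c : ℝ) : Tendsto (fun y : ℝ => y * c) (𝓝[<] 1) (𝓝 c) := by
  simpa using ((continuous_mul_const c).tendsto 1).mono_left nhdsWithin_le_nhds

theorem intervalIntegrable_one_sub_rpow {r : ℝ} (hr : -1 < r) :
    IntervalIntegrable (fun t : ℝ => (1 - t) ^ r) volume 0 1 := by
  simpa using
    ((intervalIntegrable_rpow' hr (a := 0) (b := 1)).comp_sub_left 1).symm

theorem integral_one_sub_rpow {r : ℝ} (hr : -1 < r) :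
    ∫ t in (0 : ℝ)..1, (1 - t) ^ r = 1 / (r + 1) := by
  rw [integral_comp_sub_left (fun t : ℝ => t ^ r), sub_self, sub_zero,
    integral_rpow (Or.inl hr), Real.one_rpow, Real.zero_rpow (by linarith)]
  ring

theorem hasDerivAt_parabola (E t : ℝ) :
    HasDerivAt (fun x : ℝ => E * (1 - x ^ 2) / 2) (-E * t) t := by
  have hsq : HasDerivAt (fun x : ℝ => x ^ 2) (2 * t) t := by simpa using hasDerivAt_pow 2 t
  exact (((hsq.const_sub 1).const_mul E).div_const 2).congr_deriv (by ring)

theorem integral_parabola (E : ℝ) : ∫ x in (0 : ℝ)..1, E * (1 - x ^ 2) / 2 = E / 3 := by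
  rw [intervalIntegral.integral_div, intervalIntegral.integral_const_mul,
    integral_sub intervalIntegrable_const
      (intervalIntegrable_pow 2)]
  norm_num
  ring

section dIco

variable {f : ℝ → ℝ} {x y : ℝ}

theorem ContDiffOn.contDiffOn_dIco {m : WithTop ℕ∞} (hf : ContDiffOn ℝ (m + 1) f (Ico 0 1)) :
    ContDiffOn ℝ m (dIco f) (Ico 0 1) :=
  hf.derivWithin (uniqueDiffOn_Ico 0 1) le_rfl

theorem ContDiffOn.hasDerivAt_dIco {m : WithTop ℕ∞} (hf : ContDiffOn ℝ m f (Ico 0 1))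
    (hm : m ≠ 0) (hx : x ∈ Ioo 0 1) : HasDerivAt f (dIco f x) x :=
  (hf.differentiableOn hm x (Ioo_subset_Ico_self hx)).hasDerivWithinAt.hasDerivAt
    (Ico_mem_nhds hx.1 hx.2)

theorem ContDiffOn.continuousOn_d3Ico (hf : ContDiffOn ℝ 3 f (Ico 0 1)) :
    ContinuousOn (d3Ico f) (Ico 0 1) :=
  (hf.contDiffOn_dIco.contDiffOn_dIco.contDiffOn_dIco (m := 0)).continuousOn

theorem ContDiffOn.dIco_bounds (hf : ContDiffOn ℝ 3 f (Ico 0 1))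
    (h3 : ∀ t ∈ Ioo 0 1, 0 ≤ d3Ico f t) (hx : 0 ≤ x) (hxy : x ≤ y) (hy : y < 1) :
    (y - x) * dIco f 0 + x * dIco f y - y * ∫ t in 0..y, (y - t) * d3Ico f t ≤
        y * dIco f x ∧
      y * dIco f x ≤ (y - x) * dIco f 0 + x * dIco f y := by
  have h1 : ContDiffOn ℝ 2 (dIco f) (Ico 0 1) := hf.contDiffOn_dIco
  have h2 : ContDiffOn ℝ 1 (dIco (dIco f)) (Ico 0 1) := h1.contDiffOn_dIco
  have hIcc : Icc 0 y ⊆ Ico 0 1 := Icc_subset_Ico_right hy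
  have hIoo : Ioo 0 y ⊆ Ioo 0 1 := Ioo_subset_Ioo_right hy.le
  have hd : ∀ t ∈ Ioo 0 y, HasDerivAt (dIco f) (dIco (dIco f) t) t :=
    fun t ht => h1.hasDerivAt_dIco two_ne_zero (hIoo ht)
  have hd' : ∀ t ∈ Ioo 0 y, HasDerivAt (dIco (dIco f)) (d3Ico f t) t :=
    fun t ht => h2.hasDerivAt_dIco one_ne_zero (hIoo ht)
  have hpos : ∀ t ∈ Ioo 0 y, 0 ≤ d3Ico f t := fun t ht => h3 t (hIoo ht)
  constructor
  · simpa only [sub_zero] using chord_sub_le_mul_of_deriv2_nonneg hx hxy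
      (h1.continuousOn.mono hIcc) (h2.continuousOn.mono hIcc)
      (hf.continuousOn_d3Ico.mono hIcc) hd hd' hpos
  · simpa using mul_le_chord_of_deriv2_nonneg hx hxy (h1.continuousOn.mono hIcc)
      (h2.continuousOn.mono hIcc) (hf.continuousOn_d3Ico.mono hIcc) hd hd' hpos

end dIco

noncomputable def contactSlope (n D B : ℝ) : ℝ := D * B ^ (4 / (n + 3))

/-- `∫₀¹ B² (E/2)^(1-n) (1-t)^(2-n) dt`, the integral of the bound on `(1 - t) H'''(t)` that
follows from `H(t) ≥ E (1 - t) / 2`. -/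
noncomputable def parabolaError (n B E : ℝ) : ℝ := B ^ 2 * (E / 2) ^ (1 - n) / (3 - n)

theorem parabolaError_contactSlope {n D B : ℝ} (hn : 0 < n + 3) (hD : 0 < D) (hB : 0 < B) :
    parabolaError n B (contactSlope n D B) =
      2 ^ (n - 1) / (3 - n) * contactSlope n D B ^ ((5 - n) / 2) * D ^ (-((n + 3) / 2)) := by
  set E := contactSlope n D B
  have hE : 0 < E := mul_pos hD (Real.rpow_pos_of_pos hB _)
  have hBE : B ^ (4 / (n + 3)) = E / D := by rw [eq_div_iff hD.ne', mul_comm]; rfl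
  have hB2 : B ^ 2 = E ^ ((n + 3) / 2) * D ^ (-((n + 3) / 2)) := by
    rw [← Real.rpow_natCast, show ((2 : ℕ) : ℝ) = 4 / (n + 3) * ((n + 3) / 2) by
      field_simp; norm_num, Real.rpow_mul hB.le, hBE, Real.div_rpow hE.le hD.le,
      Real.rpow_neg hD.le, div_eq_mul_inv]
  have hE2 : (E / 2) ^ (1 - n) = E ^ (1 - n) * 2 ^ (n - 1) := by
    rw [Real.div_rpow hE.le zero_le_two, div_eq_mul_inv, ← Real.rpow_neg zero_le_two, neg_sub]
  rw [parabolaError, hB2, hE2, show (5 - n) / 2 = (n + 3) / 2 + (1 - n) by ring,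
    Real.rpow_add hE]
  ring

namespace IsSSNew

variable {n D B : ℝ} {H : ℝ → ℝ} {x : ℝ}

theorem B_pos (hs : IsSSNew n D B H) : 0 < B := hs.1

theorem continuousOn (hs : IsSSNew n D B H) : ContinuousOn H (Icc 0 1) := hs.2.1

theorem pos (hs : IsSSNew n D B H) (hx : x ∈ Ico 0 1) : 0 < H x := hs.2.2.1 x hx

theorem contDiffOn (hs : IsSSNew n D B H) : ContDiffOn ℝ 3 H (Ico 0 1) := hs.2.2.2.1

theorem ode (hs : IsSSNew n D B H) (hx : x ∈ Ioo 0 1) :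
    H x ^ (n - 1) * d3Ico H x = B ^ 2 * x :=
  hs.2.2.2.2.1 x hx

theorem dIco_zero (hs : IsSSNew n D B H) : dIco H 0 = 0 := hs.2.2.2.2.2.1

theorem apply_one (hs : IsSSNew n D B H) : H 1 = 0 := hs.2.2.2.2.2.2.1

theorem integral_eq_one (hs : IsSSNew n D B H) : ∫ x in (0 : ℝ)..1, H x = 1 :=
  hs.2.2.2.2.2.2.2.2

theorem contactSlope_pos (hs : IsSSNew n D B H) (hD : 0 < D) : 0 < contactSlope n D B :=
  mul_pos hD (Real.rpow_pos_of_pos hs.B_pos _)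

theorem d3Ico_eq (hs : IsSSNew n D B H) (hx : x ∈ Ioo 0 1) :
    d3Ico H x = B ^ 2 * x / H x ^ (n - 1) := by
  have hHx : 0 < H x ^ (n - 1) := Real.rpow_pos_of_pos (hs.pos (Ioo_subset_Ico_self hx)) _
  rw [eq_div_iff hHx.ne', mul_comm, hs.ode hx]

theorem d3Ico_pos (hs : IsSSNew n D B H) (hx : x ∈ Ioo 0 1) : 0 < d3Ico H x := by
  rw [hs.d3Ico_eq hx]
  exact div_pos (mul_pos (pow_pos hs.B_pos 2) hx.1)
    (Real.rpow_pos_of_pos (hs.pos (Ioo_subset_Ico_self hx)) _)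

theorem tendsto_dIco (hs : IsSSNew n D B H) (hD : 0 < D) :
    Tendsto (dIco H) (𝓝[<] 1) (𝓝 (-contactSlope n D B)) := by
  have hE := hs.contactSlope_pos hD
  obtain ⟨hB, hcont, hpos, hC3, -, -, hH1, hslope, -⟩ := hs
  have hsq : D ^ 2 * B ^ (2 * (4 / (n + 3))) = contactSlope n D B ^ 2 := by
    rw [contactSlope, mul_pow, mul_comm 2, Real.rpow_mul hB.le, Real.rpow_two]
  exact tendsto_neg_of_tendsto_sq zero_lt_one hcont hH1 hpos
    (fun t ht => hC3.hasDerivAt_dIco three_ne_zero ht)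
    ((hC3.contDiffOn_dIco (m := 2)).continuousOn.mono Ioo_subset_Ico_self) hE (hsq ▸ hslope)

theorem dIco_le (hs : IsSSNew n D B H) (hD : 0 < D) (hx : x ∈ Ico 0 1) :
    dIco H x ≤ -contactSlope n D B * x := by
  rw [mul_comm]
  refine le_of_tendsto_of_tendsto (tendsto_mul_nhdsLT_one (dIco H x))
    ((hs.tendsto_dIco hD).const_mul x) ?_
  filter_upwards [Ioo_mem_nhdsLT hx.2] with y hy
  simpa [hs.dIco_zero] using (hs.contDiffOn.dIco_bounds (fun t ht => (hs.d3Ico_pos ht).le)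
    hx.1 hy.1.le hy.2).2

theorem parabola_le (hs : IsSSNew n D B H) (hD : 0 < D) (hx : x ∈ Icc 0 1) :
    contactSlope n D B * (1 - x ^ 2) / 2 ≤ H x :=
  le_of_deriv_le_of_le_right (f := fun x => contactSlope n D B * (1 - x ^ 2) / 2)
    (f' := fun t => -contactSlope n D B * t) zero_le_one (by fun_prop) hs.continuousOn
    (fun t _ => hasDerivAt_parabola _ t)
    (fun t ht => hs.contDiffOn.hasDerivAt_dIco three_ne_zero ht)
    (fun t ht => hs.dIco_le hD (Ioo_subset_Ico_self ht)) (by simp [hs.apply_one]) hx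

theorem one_sub_mul_d3Ico_le (hs : IsSSNew n D B H) (hn : 1 ≤ n) (hD : 0 < D) {t : ℝ}
    (ht : t ∈ Ioo 0 1) :
    (1 - t) * d3Ico H t ≤ B ^ 2 * (contactSlope n D B / 2) ^ (1 - n) * (1 - t) ^ (2 - n) := by
  set P := contactSlope n D B / 2 * (1 - t)
  have h1t : 0 < 1 - t := sub_pos.2 ht.2
  have hE2 : 0 < contactSlope n D B / 2 := half_pos (hs.contactSlope_pos hD)
  have hP : 0 < P := mul_pos hE2 h1t
  have hPH : P ≤ H t := by
    refine le_trans ?_ (hs.parabola_le hD (Ioo_subset_Icc_self ht))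
    have := mul_pos hE2 (mul_pos ht.1 h1t)
    simp only [P]
    nlinarith
  have hPH' : P ^ (n - 1) ≤ H t ^ (n - 1) := Real.rpow_le_rpow hP.le hPH (by linarith)
  have hPpow : 0 < P ^ (n - 1) := Real.rpow_pos_of_pos hP _
  have hB2 : 0 < B ^ 2 := pow_pos hs.B_pos 2
  calc (1 - t) * d3Ico H t = (1 - t) * (B ^ 2 * t / H t ^ (n - 1)) := by rw [hs.d3Ico_eq ht]
    _ ≤ (1 - t) * (B ^ 2 / P ^ (n - 1)) := by
        gcongr
        exact mul_le_of_le_one_right hB2.le ht.2.le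
    _ = B ^ 2 * (contactSlope n D B / 2) ^ (1 - n) * (1 - t) ^ (2 - n) := by
        rw [show (2 : ℝ) - n = 1 + (1 - n) by ring, Real.rpow_add h1t, Real.rpow_one,
          div_eq_mul_inv, ← Real.rpow_neg hP.le, neg_sub, Real.mul_rpow hE2.le h1t.le]
        ring

theorem integral_sub_mul_d3Ico_le (hs : IsSSNew n D B H) (hn : n ∈ Ico 1 3) (hD : 0 < D)
    {y : ℝ} (hy : y ∈ Ico 0 1) :
    ∫ t in 0..y, (y - t) * d3Ico H t ≤ parabolaError n B (contactSlope n D B) := by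
  set c := B ^ 2 * (contactSlope n D B / 2) ^ (1 - n)
  have hc : 0 ≤ c :=
    mul_nonneg (sq_nonneg B) (Real.rpow_nonneg (half_pos (hs.contactSlope_pos hD)).le _)
  have hr : (-1 : ℝ) < 2 - n := by linarith [hn.2]
  have hg : IntervalIntegrable (fun t : ℝ => c * (1 - t) ^ (2 - n)) volume 0 1 :=
    (intervalIntegrable_one_sub_rpow hr).const_mul c
  calc ∫ t in 0..y, (y - t) * d3Ico H t ≤ ∫ t in 0..y, c * (1 - t) ^ (2 - n) := by
        refine integral_mono_on_of_le_Ioo hy.1 ?_ ?_ fun t ht => ?_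
        · exact ((continuousOn_const.sub continuousOn_id).mul
            (hs.contDiffOn.continuousOn_d3Ico.mono
              (Icc_subset_Ico_right hy.2))).intervalIntegrable_of_Icc hy.1
        · refine hg.mono_set ?_
          rw [uIcc_of_le hy.1, uIcc_of_le zero_le_one]
          exact Icc_subset_Icc_right hy.2.le
        · have ht1 : t ∈ Ioo 0 1 := ⟨ht.1, ht.2.trans hy.2⟩
          calc (y - t) * d3Ico H t ≤ (1 - t) * d3Ico H t := by
                gcongr
                · exact (hs.d3Ico_pos ht1).le
                · exact hy.2.le
            _ ≤ c * (1 - t) ^ (2 - n) := hs.one_sub_mul_d3Ico_le hn.1 hD ht1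
    _ ≤ ∫ t in 0..1, c * (1 - t) ^ (2 - n) := by
        refine integral_mono_interval le_rfl hy.1 hy.2.le ?_ hg
        filter_upwards [ae_restrict_mem measurableSet_Ioc] with t ht
        exact mul_nonneg hc (Real.rpow_nonneg (sub_nonneg.2 ht.2) _)
    _ = parabolaError n B (contactSlope n D B) := by
        rw [intervalIntegral.integral_const_mul, integral_one_sub_rpow hr, parabolaError]
        ring

theorem neg_sub_le_dIco (hs : IsSSNew n D B H) (hn : n ∈ Ico 1 3) (hD : 0 < D)
    (hx : x ∈ Ico 0 1) :
    -contactSlope n D B * x - parabolaError n B (contactSlope n D B) ≤ dIco H x := by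
  rw [mul_comm]
  refine le_of_tendsto_of_tendsto (((hs.tendsto_dIco hD).const_mul x).sub
    (tendsto_mul_nhdsLT_one _)) (tendsto_mul_nhdsLT_one (dIco H x)) ?_
  filter_upwards [Ioo_mem_nhdsLT hx.2] with y hy
  have hbound := (hs.contDiffOn.dIco_bounds (fun t ht => (hs.d3Ico_pos ht).le)
    hx.1 hy.1.le hy.2).1
  have hint := hs.integral_sub_mul_d3Ico_le hn hD ⟨hx.1.trans hy.1.le, hy.2⟩
  rw [hs.dIco_zero] at hbound
  nlinarith [hx.1.trans hy.1.le]

theorem le_parabola_add (hs : IsSSNew n D B H) (hn : n ∈ Ico 1 3) (hD : 0 < D)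
    (hx : x ∈ Icc 0 1) :
    H x ≤ contactSlope n D B * (1 - x ^ 2) / 2 +
      parabolaError n B (contactSlope n D B) * (1 - x) :=
  le_of_deriv_le_of_le_right
    (g := fun x => contactSlope n D B * (1 - x ^ 2) / 2 +
      parabolaError n B (contactSlope n D B) * (1 - x))
    (g' := fun t => -contactSlope n D B * t - parabolaError n B (contactSlope n D B))
    zero_le_one hs.continuousOn (by fun_prop)
    (fun t ht => hs.contDiffOn.hasDerivAt_dIco three_ne_zero ht)
    (fun t _ => ((hasDerivAt_parabola _ t).add
      (((hasDerivAt_id t).const_sub 1).const_mul _)).congr_deriv (by ring))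
    (fun t ht => hs.neg_sub_le_dIco hn hD (Ioo_subset_Ico_self ht))
    (by simp [hs.apply_one]) hx

theorem parabolaError_nonneg (hs : IsSSNew n D B H) (hn : n < 3) (hD : 0 < D) :
    0 ≤ parabolaError n B (contactSlope n D B) :=
  div_nonneg (mul_nonneg (sq_nonneg B)
    (Real.rpow_nonneg (half_pos (hs.contactSlope_pos hD)).le _)) (sub_nonneg.2 hn.le)

theorem contactSlope_le_three (hs : IsSSNew n D B H) (hD : 0 < D) :
    contactSlope n D B ≤ 3 := by
  have := integral_mono_on (μ := volume) zero_le_one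
    (Continuous.intervalIntegrable (by fun_prop) 0 1)
    (hs.continuousOn.intervalIntegrable_of_Icc zero_le_one) fun x hx => hs.parabola_le hD hx
  rw [integral_parabola, hs.integral_eq_one] at this
  linarith

theorem three_sub_le_contactSlope (hs : IsSSNew n D B H) (hn : n ∈ Ico 1 3) (hD : 0 < D) :
    3 - 3 / 2 * parabolaError n B (contactSlope n D B) ≤ contactSlope n D B := by
  have := integral_mono_on (μ := volume) zero_le_one
    (hs.continuousOn.intervalIntegrable_of_Icc zero_le_one)
    (Continuous.intervalIntegrable (by fun_prop) 0 1) fun x hx => hs.le_parabola_add hn hD hx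
  rw [integral_add (Continuous.intervalIntegrable (by fun_prop) 0 1)
      (Continuous.intervalIntegrable (by fun_prop) 0 1), integral_parabola,
    intervalIntegral.integral_const_mul, integral_sub intervalIntegrable_const
      intervalIntegrable_id, hs.integral_eq_one] at this
  norm_num at this
  linarith

theorem abs_sub_parabola_le (hs : IsSSNew n D B H) (hn : n ∈ Ico 1 3) (hD : 0 < D)
    (hx : x ∈ Icc 0 1) :
    |H x - 3 / 2 * (1 - x ^ 2)| ≤ parabolaError n B (contactSlope n D B) := by
  have hK := hs.parabolaError_nonneg hn.2 hD
  have hlow := hs.parabola_le hD hx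
  have hup := hs.le_parabola_add hn hD hx
  have hE := hs.three_sub_le_contactSlope hn hD
  have hE3 := hs.contactSlope_le_three hD
  have hx2 : 0 ≤ 1 - x ^ 2 := by nlinarith [hx.1, hx.2]
  rw [abs_le]
  constructor <;> nlinarith [hx.1, hx.2]

end IsSSNew

theorem tendsto_parabolaError {n : ℝ} (hn : n ∈ Ico 1 3) {B : ℝ → ℝ} {H : ℝ → ℝ → ℝ}
    (hsol : ∀ D : ℝ, 0 ≤ D → IsSSNew n D (B D) (H D)) :
    Tendsto (fun D => parabolaError n (B D) (contactSlope n D (B D))) atTop (𝓝 0) := by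
  have hC : Tendsto
      (fun D : ℝ => 2 ^ (n - 1) / (3 - n) * 3 ^ ((5 - n) / 2) * D ^ (-((n + 3) / 2)))
      atTop (𝓝 0) := by
    simpa using (tendsto_rpow_neg_atTop (by linarith [hn.1])).const_mul _
  refine tendsto_of_tendsto_of_tendsto_of_le_of_le' tendsto_const_nhds hC ?_ ?_
  · filter_upwards [eventually_gt_atTop 0] with D hD
    exact (hsol D hD.le).parabolaError_nonneg hn.2 hD
  · filter_upwards [eventually_gt_atTop 0] with D hD
    have hs := hsol D hD.le
    have h3n : 0 < 3 - n := sub_pos.2 hn.2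
    rw [parabolaError_contactSlope (by linarith [hn.1]) hD hs.B_pos]
    gcongr
    · exact (hs.contactSlope_pos hD).le
    · linarith [hn.2]
    · exact hs.contactSlope_le_three hD

/-- If for every `D ≥ 0` the pair `(B_D, H_D)` solves (ss-new), then `D · B_D^α → 3` and
`H_D → (3/2)(1 - x²)` uniformly on `[0,1]` as `D → ∞` (with `α = 4/(n+3)`). -/
theorem ssnew_large_friction_limit (n : ℝ) (hn : n ∈ Set.Ico (1:ℝ) 3)
    (B : ℝ → ℝ) (H : ℝ → ℝ → ℝ)
    (hsol : ∀ D : ℝ, 0 ≤ D → IsSSNew n D (B D) (H D)) :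
    Filter.Tendsto (fun D => D * B D ^ (4 / (n + 3))) Filter.atTop (nhds 3) ∧
    TendstoUniformlyOn (fun D x => H D x) (fun x => 3 / 2 * (1 - x ^ 2))
      Filter.atTop (Set.Icc 0 1) := by
  have hK := tendsto_parabolaError hn hsol
  constructor
  · refine tendsto_of_tendsto_of_tendsto_of_le_of_le'
      (by simpa using (hK.const_mul (3 / 2)).const_sub 3) tendsto_const_nhds ?_ ?_
    · filter_upwards [eventually_gt_atTop 0] with D hD
      exact (hsol D hD.le).three_sub_le_contactSlope hn hD
    · filter_upwards [eventually_gt_atTop 0] with D hD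
      exact (hsol D hD.le).contactSlope_le_three hD
  · rw [Metric.tendstoUniformlyOn_iff]
    intro ε hε
    filter_upwards [hK.eventually (gt_mem_nhds hε), eventually_gt_atTop 0]
      with D hKε hD x hx
    rw [Real.dist_eq, abs_sub_comm]
    exact ((hsol D hD.le).abs_sub_parabola_le hn hD hx).trans_lt hKε
end

section
/- Let a < s be real numbers and let h : (a,s) → ℝ be twice differentiable with h > 0 on (a,s). Suppose h(y) → 0 as y → s⁻ and h(y)·h''(y) → k as y → s⁻ for some k ≠ 0. Then h' is unbounded near s, i.e., for every δ > 0 with s − δ > a, the function y ↦ (h'(y))² is not bounded on (s − δ, s). -/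
/-!
If `(h')²` stayed bounded by `M` near `s`, then `h(y) ≤ C (s - y)` with `C = √M + 1`, because
`h → 0` at `s`. Since `h · h'' → k ≠ 0`, the function `g = k h'` then satisfies
`g' = k h'' ≥ k² / (2 h) ≥ (k² / 2C) / (s - y)` near `s`, so `g` grows at least like
`-(k² / 2C) log (s - y)` and tends to `+∞`, contradicting the boundedness of `h'`.
-/

open Set Filter Topology

lemma abs_le_mul_sub_of_abs_deriv_le {f : ℝ → ℝ} {b s C : ℝ}
    (hf : ∀ y ∈ Ioo b s, DifferentiableAt ℝ f y) (hC : ∀ y ∈ Ioo b s, |deriv f y| ≤ C)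
    (hlim : Tendsto f (𝓝[<] s) (𝓝 0)) {y : ℝ} (hy : y ∈ Ioo b s) :
    |f y| ≤ C * (s - y) := by
  have hclose : ∀ᶠ z in 𝓝[<] s, |f z - f y| ≤ C * (z - y) := by
    filter_upwards [Ioo_mem_nhdsLT hy.2] with z hz
    have hyz : y ≤ z := hz.1.le
    simpa [Real.norm_eq_abs, abs_of_nonneg (sub_nonneg.2 hyz)] using
      (convex_Ioo b s).norm_image_sub_le_of_norm_deriv_le hf hC hy ⟨hy.1.trans_le hyz, hz.2⟩
  have hleft : Tendsto (fun z => |f z - f y|) (𝓝[<] s) (𝓝 |0 - f y|) :=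
    (hlim.sub_const _).abs
  have hright : Tendsto (fun z => C * (z - y)) (𝓝[<] s) (𝓝 (C * (s - y))) :=
    ((continuous_const.mul (continuous_id.sub continuous_const)).tendsto s).mono_left
      nhdsWithin_le_nhds
  simpa using le_of_tendsto_of_tendsto hleft hright hclose

lemma tendsto_neg_log_sub_nhdsLT (s : ℝ) :
    Tendsto (fun y => -Real.log (s - y)) (𝓝[<] s) atTop := by
  have hsub : Tendsto (fun y => s - y) (𝓝[<] s) (𝓝[>] 0) := by
    refine tendsto_nhdsWithin_of_tendsto_nhds_of_eventually_within _ ?_ ?_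
    · simpa using (tendsto_const_nhds.sub tendsto_id : Tendsto (fun y => s - y) (𝓝 s) _)
        |>.mono_left nhdsWithin_le_nhds
    · filter_upwards [self_mem_nhdsWithin] with y (hy : y < s)
      exact sub_pos.2 hy
  exact tendsto_neg_atBot_atTop.comp (Real.tendsto_log_nhdsGT_zero.comp hsub)

lemma tendsto_atTop_of_div_sub_le_deriv {g : ℝ → ℝ} {s c : ℝ} (hc : 0 < c)
    (hg : ∀ᶠ y in 𝓝[<] s, DifferentiableAt ℝ g y)
    (hder : ∀ᶠ y in 𝓝[<] s, c / (s - y) ≤ deriv g y) :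
    Tendsto g (𝓝[<] s) atTop := by
  obtain ⟨l, hl, hls⟩ := mem_nhdsLT_iff_exists_Ioo_subset.mp (hg.and hder)
  set φ : ℝ → ℝ := fun y => g y + c * Real.log (s - y)
  have hφ : ∀ y ∈ Ioo l s, HasDerivAt φ (deriv g y - c / (s - y)) y := by
    intro y hy
    have hsy : s - y ≠ 0 := (sub_pos.2 hy.2).ne'
    have hlog : HasDerivAt (fun y => Real.log (s - y)) (-1 / (s - y)) y :=
      ((hasDerivAt_id y).const_sub s).log hsy
    exact ((hls hy).1.hasDerivAt.add (hlog.const_mul c)).congr_deriv (by ring)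
  have hmono : MonotoneOn φ (Ioo l s) := by
    refine monotoneOn_of_hasDerivWithinAt_nonneg (f' := fun y => deriv g y - c / (s - y))
      (convex_Ioo l s)
      (fun y hy => (hφ y hy).continuousAt.continuousWithinAt) ?_ ?_
    · rw [interior_Ioo]
      exact fun y hy => (hφ y hy).hasDerivWithinAt
    · rw [interior_Ioo]
      exact fun y hy => sub_nonneg.2 (hls hy).2
  obtain ⟨y₁, hy₁⟩ : (Ioo l s).Nonempty := nonempty_Ioo.2 hl
  have hlower : (fun y => φ y₁ + c * -Real.log (s - y)) ≤ᶠ[𝓝[<] s] g := by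
    filter_upwards [Ioo_mem_nhdsLT hy₁.2] with y hy
    have := hmono hy₁ ⟨hy₁.1.trans hy.1, hy.2⟩ hy.1.le
    simp only [φ] at this ⊢
    linarith
  exact tendsto_atTop_mono' _ hlower <| tendsto_atTop_add_const_left _ _ <|
    (tendsto_neg_log_sub_nhdsLT s).const_mul_atTop hc

theorem slope_unbounded_of_hhpp_limit_ne_zero_general
    (a s : ℝ) (h : ℝ → ℝ)
    (hpos : ∀ y ∈ Set.Ioo a s, 0 < h y)
    (hdiff : ∀ y ∈ Set.Ioo a s, DifferentiableAt ℝ h y ∧ DifferentiableAt ℝ (deriv h) y)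
    (hlim0 : Filter.Tendsto h (nhdsWithin s (Set.Ioo a s)) (nhds 0))
    (k : ℝ) (hk : k ≠ 0)
    (hlimk : Filter.Tendsto (fun y => h y * deriv (deriv h) y)
      (nhdsWithin s (Set.Ioo a s)) (nhds k)) :
    ∀ δ > 0, a < s - δ →
      ¬ ∃ M : ℝ, ∀ y ∈ Set.Ioo (s - δ) s, (deriv h y) ^ 2 ≤ M := by
  rintro δ hδ haδ ⟨M, hM⟩
  rw [nhdsWithin_Ioo_eq_nhdsLT (by linarith)] at hlim0 hlimk
  have hnear : ∀ᶠ y in 𝓝[<] s, y ∈ Ioo (s - δ) s := Ioo_mem_nhdsLT (by linarith)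
  have hsub : Ioo (s - δ) s ⊆ Ioo a s := Ioo_subset_Ioo_left haδ.le
  set C := √M + 1
  have hC : ∀ y ∈ Ioo (s - δ) s, |deriv h y| ≤ C :=
    fun y hy => (Real.abs_le_sqrt (hM y hy)).trans (by linarith)
  have hCpos : 0 < C := by positivity
  have hkk : k ^ 2 / 2 < k * k := by nlinarith [sq_pos_of_ne_zero hk]
  have hgrow : Tendsto (fun y => k * deriv h y) (𝓝[<] s) atTop := by
    refine tendsto_atTop_of_div_sub_le_deriv (c := k ^ 2 / (2 * C)) (by positivity)
      (hnear.mono fun y hy => ((hdiff y (hsub hy)).2).const_mul k) ?_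
    filter_upwards [hnear, (hlimk.const_mul k).eventually (lt_mem_nhds hkk)] with y hy hky
    have hhy : h y ≤ C * (s - y) := (le_abs_self _).trans
      (abs_le_mul_sub_of_abs_deriv_le (fun z hz => (hdiff z (hsub hz)).1) hC hlim0 hy)
    have hh0 := hpos y (hsub hy)
    have hsy : 0 < s - y := sub_pos.2 hy.2
    rw [deriv_const_mul _ (hdiff y (hsub hy)).2, div_le_iff₀ hsy, div_le_iff₀ (by positivity)]
    nlinarith
  obtain ⟨y, hy, hbig⟩ := (hnear.and (hgrow.eventually_gt_atTop (|k| * C))).exists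
  have hbdd : |k * deriv h y| ≤ |k| * C := by
    rw [abs_mul]
    exact mul_le_mul_of_nonneg_left (hC y hy) (abs_nonneg k)
  linarith [le_abs_self (k * deriv h y)]

/-- If `h > 0` is twice differentiable on `(a,s)`, `h → 0` at `s⁻`, and `h·h'' → k ≠ 0` at
`s⁻`, then `(h')²` is unbounded near `s`. -/
theorem slope_unbounded_of_hhpp_limit_ne_zero
    (a s : ℝ) (has : a < s) (h : ℝ → ℝ)
    (hpos : ∀ y ∈ Set.Ioo a s, 0 < h y)
    (hdiff : ∀ y ∈ Set.Ioo a s, DifferentiableAt ℝ h y ∧ DifferentiableAt ℝ (deriv h) y)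
    (hlim0 : Filter.Tendsto h (nhdsWithin s (Set.Ioo a s)) (nhds 0))
    (k : ℝ) (hk : k ≠ 0)
    (hlimk : Filter.Tendsto (fun y => h y * deriv (deriv h) y)
      (nhdsWithin s (Set.Ioo a s)) (nhds k)) :
    ∀ δ > 0, a < s - δ →
      ¬ ∃ M : ℝ, ∀ y ∈ Set.Ioo (s - δ) s, (deriv h y) ^ 2 ≤ M :=
  slope_unbounded_of_hhpp_limit_ne_zero_general a s h hpos hdiff hlim0 k hk hlimk
end

section
/- Let C₁ := 5/6 − log 2 and define H₁ : [0,1) → ℝ by H₁(x) = (C₁/2)(1 − x²) − (1/4)( 3 − 3x² − 4·log 2 + (x−1)²·log(1−x) + (x+1)²·log(1+x) ), where log is the natural logarithm. Then H₁ is three times continuously differentiable on [0,1) with H₁'''(x) = x/(1 − x²) for all x ∈ (0,1), H₁'(0) = 0, H₁''(0) = −C₁, lim_{x→1⁻} H₁(x) = 0, and ∫_0^1 H₁(x) dx = 0. -/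
open Real Set Filter Topology

theorem continuous_pow_mul_log {n : ℕ} (hn : n ≠ 0) : Continuous fun t : ℝ => t ^ n * log t := by
  obtain ⟨k, rfl⟩ := Nat.exists_eq_succ_of_ne_zero hn
  simpa only [pow_succ, mul_assoc] using (continuous_pow k).fun_mul continuous_mul_log

theorem Set.EqOn.derivWithin_eqOn_of_hasDerivWithinAt {𝕜 F : Type*} [NontriviallyNormedField 𝕜]
    [NormedAddCommGroup F] [NormedSpace 𝕜 F] {f g g' : 𝕜 → F} {s : Set 𝕜} (hfg : EqOn f g s)
    (hs : UniqueDiffOn 𝕜 s) (hg : ∀ x ∈ s, HasDerivWithinAt g (g' x) s x) :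
    EqOn (derivWithin f s) g' s := fun x hx => by
  rw [derivWithin_congr hfg (hfg hx)]
  exact (hg x hx).derivWithin (hs x hx)

noncomputable def corrProfile (c x : ℝ) : ℝ :=
  c / 2 * (1 - x ^ 2) -
    1 / 4 * (3 - 3 * x ^ 2 - 4 * log 2 + (x - 1) ^ 2 * log (1 - x) + (x + 1) ^ 2 * log (1 + x))

noncomputable def corrProfileDeriv (c x : ℝ) : ℝ :=
  -(c * x) + x - 1 / 2 * ((x - 1) * log (1 - x) + (x + 1) * log (1 + x))

noncomputable def corrProfileDeriv2 (c x : ℝ) : ℝ :=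
  -c - 1 / 2 * (log (1 - x) + log (1 + x))

noncomputable def corrProfileAntideriv (c x : ℝ) : ℝ :=
  c / 2 * (x - x ^ 3 / 3) -
    1 / 4 * (3 * x - x ^ 3 - 4 * x * log 2 - ((1 - x) ^ 3 * log (1 - x) / 3 - (1 - x) ^ 3 / 9) +
      ((1 + x) ^ 3 * log (1 + x) / 3 - (1 + x) ^ 3 / 9))

section Derivatives

variable {c x : ℝ}

theorem hasDerivAt_corrProfile (hx : x ∈ Ioo (-1 : ℝ) 1) :
    HasDerivAt (corrProfile c) (corrProfileDeriv c x) x := by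
  have hsub : 1 - x ≠ 0 := by linarith [hx.2]
  have hadd : 1 + x ≠ 0 := by linarith [hx.1]
  have hlsub := ((hasDerivAt_id' x).const_sub 1).log hsub
  have hladd := ((hasDerivAt_id' x).const_add 1).log hadd
  have hsq := hasDerivAt_pow 2 x
  have hA := (((hasDerivAt_id' x).sub_const 1).fun_pow 2).fun_mul hlsub
  have hB := (((hasDerivAt_id' x).add_const 1).fun_pow 2).fun_mul hladd
  have hpoly := ((hsq.const_mul 3).const_sub 3).sub_const (4 * log 2)
  have h := ((hsq.const_sub 1).const_mul (c / 2)).fun_sub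
    (((hpoly.fun_add hA).fun_add hB).const_mul (1 / 4))
  refine h.congr_deriv ?_
  simp only [corrProfileDeriv]
  field_simp
  ring

theorem hasDerivAt_corrProfileDeriv (hx : x ∈ Ioo (-1 : ℝ) 1) :
    HasDerivAt (corrProfileDeriv c) (corrProfileDeriv2 c x) x := by
  have hsub : 1 - x ≠ 0 := by linarith [hx.2]
  have hadd : 1 + x ≠ 0 := by linarith [hx.1]
  have hlsub := ((hasDerivAt_id' x).const_sub 1).log hsub
  have hladd := ((hasDerivAt_id' x).const_add 1).log hadd
  have hA := ((hasDerivAt_id' x).sub_const 1).fun_mul hlsub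
  have hB := ((hasDerivAt_id' x).add_const 1).fun_mul hladd
  have h := (((hasDerivAt_id' x).const_mul c).fun_neg.fun_add (hasDerivAt_id' x)).fun_sub
    ((hA.fun_add hB).const_mul (1 / 2))
  refine h.congr_deriv ?_
  simp only [corrProfileDeriv2]
  field_simp
  ring

theorem hasDerivAt_corrProfileDeriv2 (hx : x ∈ Ioo (-1 : ℝ) 1) :
    HasDerivAt (corrProfileDeriv2 c) (x / (1 - x ^ 2)) x := by
  have hsub : 1 - x ≠ 0 := by linarith [hx.2]
  have hadd : 1 + x ≠ 0 := by linarith [hx.1]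
  have hlsub := ((hasDerivAt_id' x).const_sub 1).log hsub
  have hladd := ((hasDerivAt_id' x).const_add 1).log hadd
  have h := (hasDerivAt_const x (-c)).fun_sub ((hlsub.fun_add hladd).const_mul (1 / 2))
  refine h.congr_deriv ?_
  rw [show 1 - x ^ 2 = (1 - x) * (1 + x) by ring]
  field_simp
  ring

theorem contDiffOn_corrProfile {n : WithTop ℕ∞} :
    ContDiffOn ℝ n (corrProfile c) (Ioo (-1) 1) := fun x hx => by
  have hsub : 1 - x ≠ 0 := by linarith [hx.2]
  have hadd : 1 + x ≠ 0 := by linarith [hx.1]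
  unfold corrProfile
  exact ContDiffAt.contDiffWithinAt (by fun_prop (disch := assumption))

theorem hasDerivAt_corrProfileAntideriv (hx : x ∈ Ioo (-1 : ℝ) 1) :
    HasDerivAt (corrProfileAntideriv c) (corrProfile c x) x := by
  have hsub : 1 - x ≠ 0 := by linarith [hx.2]
  have hadd : 1 + x ≠ 0 := by linarith [hx.1]
  have hlsub := ((hasDerivAt_id' x).const_sub 1).log hsub
  have hladd := ((hasDerivAt_id' x).const_add 1).log hadd
  have hcsub := ((hasDerivAt_id' x).const_sub 1).fun_pow 3
  have hcadd := ((hasDerivAt_id' x).const_add 1).fun_pow 3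
  have hcube := hasDerivAt_pow 3 x
  have hA := ((hcsub.fun_mul hlsub).div_const 3).fun_sub (hcsub.div_const 9)
  have hB := ((hcadd.fun_mul hladd).div_const 3).fun_sub (hcadd.div_const 9)
  have hpoly := ((((hasDerivAt_id' x).const_mul 3).fun_sub hcube).fun_sub
    (((hasDerivAt_id' x).const_mul 4).mul_const (log 2)))
  have h := (((hasDerivAt_id' x).fun_sub (hcube.div_const 3)).const_mul (c / 2)).fun_sub
    (((hpoly.fun_sub hA).fun_add hB).const_mul (1 / 4))
  refine h.congr_deriv ?_
  simp only [corrProfile]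
  field_simp
  ring

end Derivatives

theorem continuous_corrProfile (c : ℝ) : Continuous (corrProfile c) := by
  have hsub : Continuous fun x : ℝ => (1 - x) ^ 2 * log (1 - x) :=
    (continuous_pow_mul_log two_ne_zero).comp (continuous_sub_left 1)
  have hadd : Continuous fun x : ℝ => (1 + x) ^ 2 * log (1 + x) :=
    (continuous_pow_mul_log two_ne_zero).comp (continuous_const_add 1)
  have h : corrProfile c = fun x => c / 2 * (1 - x ^ 2) - 1 / 4 * (3 - 3 * x ^ 2 - 4 * log 2 +
      (1 - x) ^ 2 * log (1 - x) + (1 + x) ^ 2 * log (1 + x)) := by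
    funext x
    simp only [corrProfile]
    ring
  rw [h]
  fun_prop

theorem continuous_corrProfileAntideriv (c : ℝ) : Continuous (corrProfileAntideriv c) := by
  have hsub : Continuous fun x : ℝ => (1 - x) ^ 3 * log (1 - x) :=
    (continuous_pow_mul_log three_ne_zero).comp (continuous_sub_left 1)
  have hadd : Continuous fun x : ℝ => (1 + x) ^ 3 * log (1 + x) :=
    (continuous_pow_mul_log three_ne_zero).comp (continuous_const_add 1)
  unfold corrProfileAntideriv
  fun_prop

theorem tendsto_corrProfile_one (c : ℝ) : Tendsto (corrProfile c) (𝓝[<] 1) (𝓝 0) := by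
  have h := (continuous_corrProfile c).continuousWithinAt (s := Iio 1) (x := 1)
  rwa [ContinuousWithinAt, show corrProfile c 1 = 0 by norm_num [corrProfile]] at h

theorem integral_corrProfile (c : ℝ) :
    ∫ x in (0 : ℝ)..1, corrProfile c x = (c - (5 / 6 - log 2)) / 3 := by
  rw [intervalIntegral.integral_eq_sub_of_hasDerivAt_of_le zero_le_one
    (continuous_corrProfileAntideriv c).continuousOn
    (fun x hx => hasDerivAt_corrProfileAntideriv ⟨by linarith [hx.1], hx.2⟩)
    ((continuous_corrProfile c).intervalIntegrable 0 1)]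
  norm_num [corrProfileAntideriv]
  ring

/-- The first-order correction profile for strong contact-line friction with mobility exponent
`n = 2`: with `C₁ = 5/6 − log 2`, the function
`H₁(x) = (C₁/2)(1 − x²) − (1/4)(3 − 3x² − 4 log 2 + (x−1)² log(1−x) + (x+1)² log(1+x))`
is C³ on `[0,1)` with `H₁''' (x) = x/(1 − x²)` on `(0,1)`, `H₁'(0) = 0`, `H₁''(0) = −C₁`,
`H₁(x) → 0` as `x → 1⁻`, and `∫₀¹ H₁ = 0`. -/
theorem correction_profile_n2
    (C₁ : ℝ) (hC₁ : C₁ = 5 / 6 - Real.log 2)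
    (H₁ : ℝ → ℝ)
    (hH₁ : ∀ x ∈ Set.Ico (0:ℝ) 1, H₁ x =
      C₁ / 2 * (1 - x ^ 2) -
        1 / 4 * (3 - 3 * x ^ 2 - 4 * Real.log 2 +
          (x - 1) ^ 2 * Real.log (1 - x) + (x + 1) ^ 2 * Real.log (1 + x))) :
    ContDiffOn ℝ 3 H₁ (Set.Ico 0 1) ∧
    (∀ x ∈ Set.Ioo (0:ℝ) 1, d3Ico H₁ x = x / (1 - x ^ 2)) ∧
    dIco H₁ 0 = 0 ∧
    dIco (dIco H₁) 0 = -C₁ ∧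
    Filter.Tendsto H₁ (nhdsWithin 1 (Set.Iio 1)) (nhds 0) ∧
    (∫ x in (0:ℝ)..1, H₁ x) = 0 := by
  have hsub : Ico (0 : ℝ) 1 ⊆ Ioo (-1) 1 := fun x hx => ⟨by linarith [hx.1], hx.2⟩
  have hU : UniqueDiffOn ℝ (Ico (0 : ℝ) 1) := uniqueDiffOn_Ico 0 1
  have h₀ : EqOn H₁ (corrProfile C₁) (Ico 0 1) := hH₁
  have h₁ : EqOn (dIco H₁) (corrProfileDeriv C₁) (Ico 0 1) :=
    h₀.derivWithin_eqOn_of_hasDerivWithinAt hU fun x hx =>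
      (hasDerivAt_corrProfile (hsub hx)).hasDerivWithinAt
  have h₂ : EqOn (dIco (dIco H₁)) (corrProfileDeriv2 C₁) (Ico 0 1) :=
    h₁.derivWithin_eqOn_of_hasDerivWithinAt hU fun x hx =>
      (hasDerivAt_corrProfileDeriv (hsub hx)).hasDerivWithinAt
  have h₃ : EqOn (d3Ico H₁) (fun x => x / (1 - x ^ 2)) (Ico 0 1) :=
    h₂.derivWithin_eqOn_of_hasDerivWithinAt hU fun x hx =>
      (hasDerivAt_corrProfileDeriv2 (hsub hx)).hasDerivWithinAt
  have hzero : (0 : ℝ) ∈ Ico 0 1 := left_mem_Ico.2 one_pos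
  refine ⟨?_, fun x hx => h₃ (Ioo_subset_Ico_self hx), ?_, ?_, ?_, ?_⟩
  · exact (contDiffOn_corrProfile.mono hsub).congr h₀
  · simp [h₁ hzero, corrProfileDeriv]
  · simp [h₂ hzero, corrProfileDeriv2]
  · refine (tendsto_corrProfile_one C₁).congr' ?_
    filter_upwards [Ioo_mem_nhdsLT one_pos] with x hx using (h₀ (Ioo_subset_Ico_self hx)).symm
  · rw [intervalIntegral.integral_congr_Ioo_of_le zero_le_one (h₀.mono Ioo_subset_Ico_self),
      integral_corrProfile, hC₁, sub_self, zero_div]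
end

section
/- Let w : [0,1] → ℝ be three times continuously differentiable with w(1) = 0, w'(0) = 0, and w'(1) = 0. Then ∫_0^1 x · w(x) · w'''(x) dx = (3/2) ∫_0^1 (w'(x))² dx. -/
/-- First derivative within `[0,1]`. -/
noncomputable def dI (f : ℝ → ℝ) : ℝ → ℝ := derivWithin f (Set.Icc 0 1)

/-- Third derivative within `[0,1]`. -/
noncomputable def d3I (f : ℝ → ℝ) : ℝ → ℝ := dI (dI (dI f))

/-- Integration-by-parts identity: if `w` is C³ on `[0,1]` with `w(1) = 0`, `w'(0) = 0`,
`w'(1) = 0`, then `∫₀¹ x w w''' dx = (3/2) ∫₀¹ (w')² dx`. -/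
theorem coercivity_identity (w : ℝ → ℝ)
    (hreg : ContDiffOn ℝ 3 w (Set.Icc 0 1))
    (h1 : w 1 = 0) (h2 : dI w 0 = 0) (h3 : dI w 1 = 0) :
    (∫ x in (0:ℝ)..1, x * w x * d3I w x) = 3 / 2 * ∫ x in (0:ℝ)..1, (dI w x) ^ 2 := by
  have hud : UniqueDiffOn ℝ (Set.Icc (0:ℝ) 1) := uniqueDiffOn_Icc zero_lt_one
  set u : ℝ → ℝ := dI w with hu_def
  set v : ℝ → ℝ := dI u with hv_def
  set t : ℝ → ℝ := dI v with ht_def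
  have hu : ContDiffOn ℝ 2 u (Set.Icc 0 1) := hreg.derivWithin hud (by norm_num)
  have hv : ContDiffOn ℝ 1 v (Set.Icc 0 1) := hu.derivWithin hud (by norm_num)
  have hwc : ContinuousOn w (Set.Icc 0 1) := hreg.continuousOn
  have huc : ContinuousOn u (Set.Icc 0 1) := hu.continuousOn
  have hvc : ContinuousOn v (Set.Icc 0 1) := hv.continuousOn
  have htc : ContinuousOn t (Set.Icc 0 1) := hv.continuousOn_derivWithin hud le_rfl
  -- derivative facts at interior points
  have hwd : ∀ x ∈ Set.Ioo (0:ℝ) 1, HasDerivAt w (u x) x := by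
    intro x hx
    have := ((hreg.differentiableOn (by norm_num)) x (Set.Ioo_subset_Icc_self hx)).hasDerivWithinAt
    exact this.hasDerivAt (Icc_mem_nhds hx.1 hx.2)
  have hud' : ∀ x ∈ Set.Ioo (0:ℝ) 1, HasDerivAt u (v x) x := by
    intro x hx
    have := ((hu.differentiableOn (by norm_num)) x (Set.Ioo_subset_Icc_self hx)).hasDerivWithinAt
    exact this.hasDerivAt (Icc_mem_nhds hx.1 hx.2)
  have hvd : ∀ x ∈ Set.Ioo (0:ℝ) 1, HasDerivAt v (t x) x := by
    intro x hx
    have := ((hv.differentiableOn (by norm_num)) x (Set.Ioo_subset_Icc_self hx)).hasDerivWithinAt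
    exact this.hasDerivAt (Icc_mem_nhds hx.1 hx.2)
  set G : ℝ → ℝ := fun x => x * w x * v x - w x * u x - 1/2 * (x * u x ^ 2) with hG_def
  set G' : ℝ → ℝ := fun x => x * w x * t x - 3/2 * u x ^ 2 with hG'_def
  have hGc : ContinuousOn G (Set.Icc 0 1) := by
    apply ContinuousOn.sub
    apply ContinuousOn.sub
    · exact ((continuousOn_id.mul hwc).mul hvc)
    · exact hwc.mul huc
    · exact continuousOn_const.mul (continuousOn_id.mul (huc.pow 2))
  have hG'c : ContinuousOn G' (Set.Icc 0 1) := by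
    apply ContinuousOn.sub
    · exact (continuousOn_id.mul hwc).mul htc
    · exact continuousOn_const.mul (huc.pow 2)
  have hG'int : IntervalIntegrable G' MeasureTheory.volume 0 1 := by
    apply ContinuousOn.intervalIntegrable
    rwa [Set.uIcc_of_le (by norm_num : (0:ℝ) ≤ 1)]
  have key : (∫ x in (0:ℝ)..1, G' x) = G 1 - G 0 := by
    apply intervalIntegral.integral_eq_sub_of_hasDeriv_right_of_le (by norm_num) hGc _ hG'int
    intro x hx
    have hA : HasDerivAt (fun y => y * w y * v y)
        ((1 * w x + x * u x) * v x + x * w x * t x) x :=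
      ((hasDerivAt_id x).mul (hwd x hx)).mul (hvd x hx)
    have hB : HasDerivAt (fun y => w y * u y) (u x * u x + w x * v x) x :=
      (hwd x hx).mul (hud' x hx)
    have hC : HasDerivAt (fun y => 1/2 * (y * u y ^ 2))
        (1/2 * (1 * u x ^ 2 + x * (2 * u x ^ 1 * v x))) x := by
      exact ((hasDerivAt_id x).mul ((hud' x hx).pow 2)).const_mul (1/2)
    have := (hA.sub hB).sub hC
    have heq : (1 * w x + x * u x) * v x + x * w x * t x - (u x * u x + w x * v x)
        - 1/2 * (1 * u x ^ 2 + x * (2 * u x ^ 1 * v x)) = G' x := by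
      simp only [hG'_def]; ring
    rw [heq] at this
    exact this.hasDerivWithinAt
  have hG1 : G 1 = 0 := by simp only [hG_def]; rw [h1, show u 1 = 0 from h3]; ring
  have hG0 : G 0 = 0 := by simp only [hG_def]; rw [show u 0 = 0 from h2]; ring
  rw [hG1, hG0, sub_zero] at key
  have hint1 : IntervalIntegrable (fun x => x * w x * t x) MeasureTheory.volume 0 1 := by
    apply ContinuousOn.intervalIntegrable
    rw [Set.uIcc_of_le (by norm_num : (0:ℝ) ≤ 1)]
    exact (continuousOn_id.mul hwc).mul htc
  have hint2 : IntervalIntegrable (fun x => 3/2 * u x ^ 2) MeasureTheory.volume 0 1 := by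
    apply ContinuousOn.intervalIntegrable
    rw [Set.uIcc_of_le (by norm_num : (0:ℝ) ≤ 1)]
    exact continuousOn_const.mul (huc.pow 2)
  have split : (∫ x in (0:ℝ)..1, G' x)
      = (∫ x in (0:ℝ)..1, x * w x * t x) - ∫ x in (0:ℝ)..1, 3/2 * u x ^ 2 :=
    intervalIntegral.integral_sub hint1 hint2
  have hmul : (∫ x in (0:ℝ)..1, 3/2 * u x ^ 2) = 3/2 * ∫ x in (0:ℝ)..1, u x ^ 2 :=
    intervalIntegral.integral_const_mul _ _
  have hd3 : ∀ x, d3I w x = t x := fun x => rfl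
  simp only [hd3]
  rw [split, hmul] at key
  linarith [key]
end

section
/- Let n ≥ 1, let f : (0,1) → ℝ be positive, and let w : [0,1] → ℝ be three times continuously differentiable with (n−1)·x·w(x) + f(x)^n · w'''(x) = 0 for all x ∈ (0,1), w(1) = 0, w'(1) = 0, and w'(0) = 0. Then w ≡ 0 on [0,1]. -/
/-!
The equation gives `w w''' = -(n-1) x w² / fⁿ ≤ 0`. Since `(w w'' - w'²/2)' = w w'''`, the
energy `w w'' - w'²/2` is nonincreasing and vanishes at `1`, hence is nonnegative. Then
`(w w')' = w'² + w w'' ≥ 0`, so `w w'` is nondecreasing from `w w'(0) = 0`, hence nonnegative;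
that makes `w²` nondecreasing, and `w²(1) = 0` forces `w ≡ 0`.
-/

open Set

section ThirdOrder

variable {a b : ℝ} {g g' w w₁ w₂ w₃ : ℝ → ℝ}

theorem monotoneOn_Icc_of_hasDerivAt_nonneg (hg : ContinuousOn g (Icc a b))
    (hd : ∀ x ∈ Ioo a b, HasDerivAt g (g' x) x) (hpos : ∀ x ∈ Ioo a b, 0 ≤ g' x) :
    MonotoneOn g (Icc a b) :=
  monotoneOn_of_hasDerivWithinAt_nonneg (convex_Icc a b) hg
    (by simpa only [interior_Icc] using fun x hx => (hd x hx).hasDerivWithinAt)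
    (by simpa only [interior_Icc] using hpos)

theorem antitoneOn_Icc_of_hasDerivAt_nonpos (hg : ContinuousOn g (Icc a b))
    (hd : ∀ x ∈ Ioo a b, HasDerivAt g (g' x) x) (hneg : ∀ x ∈ Ioo a b, g' x ≤ 0) :
    AntitoneOn g (Icc a b) :=
  antitoneOn_of_hasDerivWithinAt_nonpos (convex_Icc a b) hg
    (by simpa only [interior_Icc] using fun x hx => (hd x hx).hasDerivWithinAt)
    (by simpa only [interior_Icc] using hneg)

theorem DifferentiableOn.hasDerivAt_derivWithin_Icc (hg : DifferentiableOn ℝ g (Icc a b)) {x : ℝ}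
    (hx : x ∈ Ioo a b) : HasDerivAt g (derivWithin g (Icc a b) x) x := by
  have hnhds : Icc a b ∈ nhds x := Icc_mem_nhds hx.1 hx.2
  rw [derivWithin_of_mem_nhds hnhds]
  exact (hg.differentiableAt hnhds).hasDerivAt

theorem energy_nonneg_of_mul_third_deriv_nonpos (hw : ContinuousOn w (Icc a b))
    (hw₁ : ContinuousOn w₁ (Icc a b)) (hw₂ : ContinuousOn w₂ (Icc a b))
    (hd : ∀ x ∈ Ioo a b, HasDerivAt w (w₁ x) x) (hd₁ : ∀ x ∈ Ioo a b, HasDerivAt w₁ (w₂ x) x)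
    (hd₂ : ∀ x ∈ Ioo a b, HasDerivAt w₂ (w₃ x) x) (hsign : ∀ x ∈ Ioo a b, w x * w₃ x ≤ 0)
    (hb : w b = 0) (hb₁ : w₁ b = 0) :
    ∀ x ∈ Icc a b, 0 ≤ w x * w₂ x - w₁ x ^ 2 / 2 := by
  have hanti : AntitoneOn (fun x => w x * w₂ x - w₁ x ^ 2 / 2) (Icc a b) := by
    refine antitoneOn_Icc_of_hasDerivAt_nonpos ((hw.mul hw₂).sub ((hw₁.pow 2).div_const 2))
      (fun x hx => ((hd x hx).mul (hd₂ x hx)).sub (((hd₁ x hx).pow 2).div_const 2))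
      fun x hx => ?_
    norm_num
    linarith [hsign x hx]
  intro x hx
  simpa [hb, hb₁] using hanti hx (right_mem_Icc.2 (hx.1.trans hx.2)) hx.2

theorem mul_deriv_nonneg_of_energy_nonneg (hw : ContinuousOn w (Icc a b))
    (hw₁ : ContinuousOn w₁ (Icc a b)) (hd : ∀ x ∈ Ioo a b, HasDerivAt w (w₁ x) x)
    (hd₁ : ∀ x ∈ Ioo a b, HasDerivAt w₁ (w₂ x) x)
    (henergy : ∀ x ∈ Ioo a b, 0 ≤ w x * w₂ x - w₁ x ^ 2 / 2) (ha₁ : w₁ a = 0) :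
    ∀ x ∈ Icc a b, 0 ≤ w x * w₁ x := by
  have hmono : MonotoneOn (fun x => w x * w₁ x) (Icc a b) := by
    refine monotoneOn_Icc_of_hasDerivAt_nonneg (hw.mul hw₁)
      (fun x hx => (hd x hx).mul (hd₁ x hx)) fun x hx => ?_
    nlinarith [henergy x hx, sq_nonneg (w₁ x)]
  intro x hx
  simpa [ha₁] using hmono (left_mem_Icc.2 (hx.1.trans hx.2)) hx hx.1

theorem eq_zero_of_mul_deriv_nonneg (hw : ContinuousOn w (Icc a b))
    (hd : ∀ x ∈ Ioo a b, HasDerivAt w (w₁ x) x) (hprod : ∀ x ∈ Ioo a b, 0 ≤ w x * w₁ x)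
    (hb : w b = 0) : ∀ x ∈ Icc a b, w x = 0 := by
  have hmono : MonotoneOn (fun x => w x ^ 2) (Icc a b) := by
    refine monotoneOn_Icc_of_hasDerivAt_nonneg (hw.pow 2)
      (fun x hx => (hd x hx).pow 2) fun x hx => ?_
    norm_num
    nlinarith [hprod x hx]
  intro x hx
  have hle : w x ^ 2 ≤ w b ^ 2 := hmono hx (right_mem_Icc.2 (hx.1.trans hx.2)) hx.2
  simpa [hb] using hle

theorem eq_zero_of_mul_third_deriv_nonpos (hw : ContinuousOn w (Icc a b))
    (hw₁ : ContinuousOn w₁ (Icc a b)) (hw₂ : ContinuousOn w₂ (Icc a b))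
    (hd : ∀ x ∈ Ioo a b, HasDerivAt w (w₁ x) x) (hd₁ : ∀ x ∈ Ioo a b, HasDerivAt w₁ (w₂ x) x)
    (hd₂ : ∀ x ∈ Ioo a b, HasDerivAt w₂ (w₃ x) x) (hsign : ∀ x ∈ Ioo a b, w x * w₃ x ≤ 0)
    (hb : w b = 0) (hb₁ : w₁ b = 0) (ha₁ : w₁ a = 0) : ∀ x ∈ Icc a b, w x = 0 := by
  have henergy := energy_nonneg_of_mul_third_deriv_nonpos hw hw₁ hw₂ hd hd₁ hd₂ hsign hb hb₁
  have hprod := mul_deriv_nonneg_of_energy_nonneg hw hw₁ hd hd₁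
    (fun x hx => henergy x (Ioo_subset_Icc_self hx)) ha₁
  exact eq_zero_of_mul_deriv_nonneg hw hd (fun x hx => hprod x (Ioo_subset_Icc_self hx)) hb

end ThirdOrder

/-- Uniqueness for the homogeneous linearized problem: if `n ≥ 1`, `f > 0` on `(0,1)`, and `w`
is C³ on `[0,1]` with `(n−1)·x·w + fⁿ·w''' = 0` on `(0,1)`, `w(1) = 0`, `w'(1) = 0`,
`w'(0) = 0`, then `w ≡ 0` on `[0,1]`. -/
theorem homogeneous_linearized_unique (n : ℝ) (hn : 1 ≤ n)
    (f : ℝ → ℝ) (hf : ∀ x ∈ Set.Ioo (0:ℝ) 1, 0 < f x)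
    (w : ℝ → ℝ) (hreg : ContDiffOn ℝ 3 w (Set.Icc 0 1))
    (heq : ∀ x ∈ Set.Ioo (0:ℝ) 1, (n - 1) * x * w x + f x ^ n * d3I w x = 0)
    (h1 : w 1 = 0) (h2 : dI w 1 = 0) (h3 : dI w 0 = 0) :
    ∀ x ∈ Set.Icc (0:ℝ) 1, w x = 0 := by
  have hs : UniqueDiffOn ℝ (Icc (0:ℝ) 1) := uniqueDiffOn_Icc one_pos
  have hw₁ : ContDiffOn ℝ 2 (dI w) (Icc 0 1) := hreg.derivWithin hs (by norm_num)
  have hw₂ : ContDiffOn ℝ 1 (dI (dI w)) (Icc 0 1) := hw₁.derivWithin hs (by norm_num)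
  have hsign : ∀ x ∈ Ioo (0:ℝ) 1, w x * d3I w x ≤ 0 := by
    intro x hx
    refine nonpos_of_mul_nonpos_right (a := f x ^ n) ?_ (Real.rpow_pos_of_pos (hf x hx) n)
    have hsq : 0 ≤ (n - 1) * x * w x ^ 2 :=
      mul_nonneg (mul_nonneg (by linarith) hx.1.le) (sq_nonneg _)
    linear_combination w x * heq x hx + hsq
  exact eq_zero_of_mul_third_deriv_nonpos hreg.continuousOn hw₁.continuousOn hw₂.continuousOn
    (fun _ => (hreg.differentiableOn (by norm_num)).hasDerivAt_derivWithin_Icc)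
    (fun _ => (hw₁.differentiableOn (by norm_num)).hasDerivAt_derivWithin_Icc)
    (fun _ => (hw₂.differentiableOn (by norm_num)).hasDerivAt_derivWithin_Icc)
    hsign h1 h2 h3
end

section
/- Let n ∈ (3/2, 3), θ > 0 and C₅ > 0, and let f : [0,1) → (0,∞) be continuous with f(x)·(1−x)^(−3/n) → C₅ as x → 1⁻. Then there exists no function g : [0,1] → ℝ that is continuously differentiable on [0,1], three times continuously differentiable on (0,1), and satisfies (n−1)·x·g(x) + f(x)^n · g'''(x) = 0 for all x ∈ (0,1), g(1) = 0, g'(1) = −θ, and g'(0) = 0. -/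
/-!
Near `x = 1` the boundary data `g(1) = 0`, `g'(1) = -θ` force `g(x) ≥ θ(1 - x)/2`, while the
asymptotics of `f` give `f(x)^n ≤ (2C₅)^n (1 - x)^3`. The equation then yields
`g''' ≤ -K/(1 - x)^2`, and two comparison arguments give `g'' ≤ A - K/(1 - x)` and
`g' ≤ B + A x + K log(1 - x) → -∞`, which contradicts the continuity of `g'` at `1`.
-/

open Set Filter Topology Real

theorem exists_eventually_le_add_of_hasDerivAt_le {φ ψ φ' ψ' : ℝ → ℝ} {b : ℝ}
    (hφ : ∀ᶠ x in 𝓝[<] b, HasDerivAt φ (φ' x) x)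
    (hψ : ∀ᶠ x in 𝓝[<] b, HasDerivAt ψ (ψ' x) x)
    (hle : ∀ᶠ x in 𝓝[<] b, φ' x ≤ ψ' x) :
    ∃ C, ∀ᶠ x in 𝓝[<] b, φ x ≤ ψ x + C := by
  obtain ⟨c, hcb, hc⟩ := mem_nhdsLT_iff_exists_Ioo_subset.mp (hφ.and (hψ.and hle))
  have hderiv : ∀ x ∈ Ioo c b, HasDerivAt (fun x => φ x - ψ x) (φ' x - ψ' x) x :=
    fun x hx => (hc hx).1.sub (hc hx).2.1
  have hanti : AntitoneOn (fun x => φ x - ψ x) (Ioo c b) := by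
    refine antitoneOn_of_hasDerivWithinAt_nonpos (f' := fun x => φ' x - ψ' x) (convex_Ioo c b)
      (fun x hx => (hderiv x hx).continuousAt.continuousWithinAt) ?_ ?_
    · simpa only [interior_Ioo] using fun x hx => (hderiv x hx).hasDerivWithinAt
    · simpa only [interior_Ioo, sub_nonpos] using fun x hx => (hc hx).2.2
  have hcb : c < b := hcb
  have hp : (c + b) / 2 ∈ Ioo c b := ⟨by linarith, by linarith⟩
  refine ⟨φ ((c + b) / 2) - ψ ((c + b) / 2), ?_⟩
  filter_upwards [Ioo_mem_nhdsLT hp.2] with x hx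
  have := hanti hp ⟨hp.1.trans hx.1, hx.2⟩ hx.1.le
  linarith

theorem tendsto_atBot_of_hasDerivAt_le_neg_div_sq {w v v' : ℝ → ℝ} {b K : ℝ} (hK : 0 < K)
    (hw : ∀ᶠ x in 𝓝[<] b, HasDerivAt w (v x) x)
    (hv : ∀ᶠ x in 𝓝[<] b, HasDerivAt v (v' x) x)
    (hv' : ∀ᶠ x in 𝓝[<] b, v' x ≤ -(K / (b - x) ^ 2)) : Tendsto w (𝓝[<] b) atBot := by
  have hpos : ∀ᶠ x in 𝓝[<] b, 0 < b - x := by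
    filter_upwards [self_mem_nhdsWithin] with x hx using sub_pos.mpr hx
  have hinv : ∀ᶠ x in 𝓝[<] b,
      HasDerivAt (fun x => -(K / (b - x))) (-(K / (b - x) ^ 2)) x := by
    filter_upwards [hpos] with x hx
    exact ((hasDerivAt_const x K).div ((hasDerivAt_id' x).const_sub b) hx.ne').neg.congr_deriv
      (by ring)
  obtain ⟨A, hA⟩ := exists_eventually_le_add_of_hasDerivAt_le hv hinv hv'
  have hlin_log : ∀ᶠ x in 𝓝[<] b,
      HasDerivAt (fun x => A * x + K * log (b - x)) (A - K / (b - x)) x := by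
    filter_upwards [hpos] with x hx
    exact (((hasDerivAt_id' x).const_mul A).add
      ((((hasDerivAt_id' x).const_sub b).log hx.ne').const_mul K)).congr_deriv (by ring)
  obtain ⟨B, hB⟩ := exists_eventually_le_add_of_hasDerivAt_le hw hlin_log
    (by filter_upwards [hA] with x hx using by linarith)
  have hlog : Tendsto (fun x => log (b - x)) (𝓝[<] b) atBot := by
    refine tendsto_log_nhdsGT_zero.comp (tendsto_nhdsWithin_iff.mpr ⟨?_, hpos⟩)
    exact ((continuous_const.sub continuous_id).tendsto' b 0 (sub_self b)).mono_left
      nhdsWithin_le_nhds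
  refine tendsto_atBot_mono' _ hB (tendsto_atBot_add_const_right _ B ?_)
  exact (((continuous_const_mul A).tendsto b).mono_left nhdsWithin_le_nhds).add_atBot
    (hlog.const_mul_atBot hK)

theorem HasDerivWithinAt.eventually_mul_sub_lt_sub {g : ℝ → ℝ} {b d m : ℝ}
    (h : HasDerivWithinAt g d (Iio b) b) (hdm : d < m) :
    ∀ᶠ x in 𝓝[<] b, m * (x - b) < g x - g b := by
  have hslope := hasDerivWithinAt_iff_tendsto_slope.mp h
  rw [sdiff_singleton_eq_self self_notMem_Iio] at hslope
  filter_upwards [hslope.eventually_lt_const hdm, self_mem_nhdsWithin] with x hx hxb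
  rw [slope_def_field] at hx
  exact (div_lt_iff_of_neg (sub_neg.mpr hxb)).mp hx

theorem ContDiffOn.tendsto_deriv_nhdsLT {g : ℝ → ℝ} {a b : ℝ} (hab : a < b)
    (hg : ContDiffOn ℝ 1 g (Icc a b)) :
    Tendsto (deriv g) (𝓝[<] b) (𝓝 (derivWithin g (Icc a b) b)) := by
  have hcont := hg.continuousOn_derivWithin (uniqueDiffOn_Icc hab) le_rfl b
    (right_mem_Icc.mpr hab.le)
  rw [← nhdsWithin_Ioo_eq_nhdsLT hab]
  refine (hcont.mono_left (nhdsWithin_mono _ Ioo_subset_Icc_self)).congr' ?_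
  filter_upwards [self_mem_nhdsWithin] with x hx
  exact derivWithin_of_mem_nhds (Icc_mem_nhds hx.1 hx.2)

theorem ContDiffOn.hasDerivAt_deriv {g : ℝ → ℝ} {s : Set ℝ} {k : WithTop ℕ∞}
    (hg : ContDiffOn ℝ k g s) (hs : IsOpen s) (hk : k ≠ 0) {x : ℝ} (hx : x ∈ s) :
    HasDerivAt g (deriv g x) x :=
  ((hg.contDiffAt (hs.mem_nhds hx)).differentiableAt hk).hasDerivAt

theorem eventually_rpow_le_mul_rpow_of_tendsto {f : ℝ → ℝ} {b C M p q : ℝ} (hp : 0 ≤ p)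
    (hCM : C < M) (hf : ∀ᶠ x in 𝓝[<] b, 0 < f x)
    (hlim : Tendsto (fun x => f x * (b - x) ^ (-q)) (𝓝[<] b) (𝓝 C)) :
    ∀ᶠ x in 𝓝[<] b, f x ^ p ≤ M ^ p * (b - x) ^ (q * p) := by
  filter_upwards [hlim.eventually_lt_const hCM, hf, self_mem_nhdsWithin] with x hlt hfx hxb
  have hbx : 0 < (b - x) ^ q := rpow_pos_of_pos (sub_pos.mpr hxb) q
  rw [rpow_neg (sub_pos.mpr hxb).le, ← div_eq_mul_inv, div_lt_iff₀ hbx] at hlt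
  have hM : 0 ≤ M := nonneg_of_mul_nonneg_left (hfx.trans hlt).le hbx
  calc f x ^ p ≤ (M * (b - x) ^ q) ^ p := rpow_le_rpow hfx.le hlt.le hp
    _ = M ^ p * (b - x) ^ (q * p) := by
      rw [mul_rpow hM hbx.le, ← rpow_mul (sub_pos.mpr hxb).le]

theorem le_neg_div_sq_of_add_mul_eq_zero {P F D M a u : ℝ} (ha : 0 ≤ a) (hu : 0 < u)
    (hF : 0 < F) (hFM : F ≤ M * u ^ 3) (hP : a * u ≤ P) (h : P + F * D = 0) :
    D ≤ -(a / M / u ^ 2) := by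
  have hMu : 0 < M * u ^ 3 := hF.trans_le hFM
  have hM : M ≠ 0 := by rintro rfl; simp at hMu
  calc D = -(P / F) := by field_simp; linarith
    _ ≤ -(a * u / (M * u ^ 3)) :=
      neg_le_neg (div_le_div₀ ((mul_nonneg ha hu.le).trans hP) hP hF hFM)
    _ = -(a / M / u ^ 2) := by field_simp

theorem eventually_le_neg_div_sq_of_mul_add_mul_eq_zero {F G D : ℝ → ℝ} {c θ M : ℝ}
    (hc : 0 ≤ c) (hθ : 0 < θ) (hF : ∀ᶠ x in 𝓝[<] 1, 0 < F x)
    (hFM : ∀ᶠ x in 𝓝[<] 1, F x ≤ M * (1 - x) ^ 3)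
    (hG : ∀ᶠ x in 𝓝[<] 1, θ / 2 * (1 - x) < G x)
    (h : ∀ᶠ x in 𝓝[<] 1, c * x * G x + F x * D x = 0) :
    ∀ᶠ x in 𝓝[<] 1, D x ≤ -(c * (θ / 4) / M / (1 - x) ^ 2) := by
  filter_upwards [Ioo_mem_nhdsLT one_half_lt_one, hF, hFM, hG, h] with x hx hFx hFMx hGx hx_eq
  refine le_neg_div_sq_of_add_mul_eq_zero (by positivity) (sub_pos.mpr hx.2) hFx hFMx ?_ hx_eq
  have hxG : θ / 4 * (1 - x) ≤ x * G x := by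
    nlinarith [mul_lt_mul_of_pos_left hGx (one_half_pos.trans hx.1),
      mul_pos (mul_pos (sub_pos.mpr hx.1) hθ) (sub_pos.mpr hx.2)]
  calc c * (θ / 4) * (1 - x) = c * (θ / 4 * (1 - x)) := by ring
    _ ≤ c * (x * G x) := mul_le_mul_of_nonneg_left hxG hc
    _ = c * x * G x := by ring

theorem no_correction_profile_large_n_general
    (n : ℝ) (hn : n ∈ Set.Ioo (3 / 2 : ℝ) 3) (θ : ℝ) (hθ : 0 < θ)
    (C₅ : ℝ) (hC₅ : 0 < C₅)
    (f : ℝ → ℝ)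
    (hfpos : ∀ x ∈ Set.Ico (0:ℝ) 1, 0 < f x)
    (hfasym : Filter.Tendsto (fun x => f x * (1 - x) ^ (-(3 / n)))
      (nhdsWithin 1 (Set.Iio 1)) (nhds C₅)) :
    ¬ ∃ g : ℝ → ℝ,
      ContDiffOn ℝ 1 g (Set.Icc 0 1) ∧
      ContDiffOn ℝ 3 g (Set.Ioo 0 1) ∧
      (∀ x ∈ Set.Ioo (0:ℝ) 1,
        (n - 1) * x * g x + f x ^ n * deriv (deriv (deriv g)) x = 0) ∧
      g 1 = 0 ∧
      derivWithin g (Set.Icc 0 1) 1 = -θ ∧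
      derivWithin g (Set.Icc 0 1) 0 = 0 := by
  rintro ⟨g, hg1, hg3, hode, hg_one, hg'_one, -⟩
  have hn1 : 1 < n := by linarith [hn.1]
  have hIoo : Ioo (0 : ℝ) 1 ∈ 𝓝[<] 1 := Ioo_mem_nhdsLT zero_lt_one
  have hg'_at_one : HasDerivWithinAt g (-θ) (Iio 1) 1 :=
    hg'_one ▸ ((hg1.differentiableOn one_ne_zero 1 (right_mem_Icc.mpr zero_le_one))
      |>.hasDerivWithinAt.mono_of_mem_nhdsWithin (mem_of_superset hIoo Ioo_subset_Icc_self))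
  have hg_lower : ∀ᶠ x in 𝓝[<] 1, θ / 2 * (1 - x) < g x := by
    filter_upwards [hg'_at_one.eventually_mul_sub_lt_sub (m := -(θ / 2)) (by linarith)] with x hx
    linarith
  have hf_pos : ∀ᶠ x in 𝓝[<] 1, 0 < f x ^ n := by
    filter_upwards [hIoo] with x hx using rpow_pos_of_pos (hfpos x ⟨hx.1.le, hx.2⟩) n
  have hf_upper : ∀ᶠ x in 𝓝[<] 1, f x ^ n ≤ (2 * C₅) ^ n * (1 - x) ^ 3 := by
    filter_upwards [eventually_rpow_le_mul_rpow_of_tendsto (M := 2 * C₅) (by linarith)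
      (by linarith) (by filter_upwards [hIoo] with x hx using hfpos x ⟨hx.1.le, hx.2⟩) hfasym]
      with x hx
    rwa [div_mul_cancel₀ _ (by linarith : n ≠ 0), rpow_ofNat] at hx
  have hg''' := eventually_le_neg_div_sq_of_mul_add_mul_eq_zero (c := n - 1) (by linarith)
    hθ hf_pos hf_upper hg_lower (by filter_upwards [hIoo] with x hx using hode x hx)
  have hK : 0 < (n - 1) * (θ / 4) / (2 * C₅) ^ n := by
    have := rpow_pos_of_pos (by linarith : 0 < 2 * C₅) n
    have : 0 < n - 1 := by linarith
    positivity
  have hdg : ContDiffOn ℝ 2 (deriv g) (Ioo 0 1) := hg3.deriv_of_isOpen isOpen_Ioo (by norm_num)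
  have hddg : ContDiffOn ℝ 1 (deriv (deriv g)) (Ioo 0 1) :=
    hdg.deriv_of_isOpen isOpen_Ioo (by norm_num)
  refine not_tendsto_atBot_of_tendsto_nhds (hg'_one ▸ hg1.tendsto_deriv_nhdsLT zero_lt_one) ?_
  exact tendsto_atBot_of_hasDerivAt_le_neg_div_sq hK
    (by filter_upwards [hIoo] with x hx using hdg.hasDerivAt_deriv isOpen_Ioo (by norm_num) hx)
    (by filter_upwards [hIoo] with x hx using hddg.hasDerivAt_deriv isOpen_Ioo (by norm_num) hx)
    hg'''

/-- Nonexistence of the first-order correction for weak contact-line friction when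
`n ∈ (3/2, 3)`: if `f > 0` is continuous on `[0,1)` with `f(x)(1−x)^{−3/n} → C₅ > 0` as
`x → 1⁻`, then there is no `g`, continuously differentiable on `[0,1]` and three times
continuously differentiable on `(0,1)`, with `(n−1)·x·g + fⁿ·g''' = 0` on `(0,1)`,
`g(1) = 0`, `g'(1) = −θ`, and `g'(0) = 0`. -/
theorem no_correction_profile_large_n
    (n : ℝ) (hn : n ∈ Set.Ioo (3 / 2 : ℝ) 3) (θ : ℝ) (hθ : 0 < θ)
    (C₅ : ℝ) (hC₅ : 0 < C₅)
    (f : ℝ → ℝ) (hfc : ContinuousOn f (Set.Ico 0 1))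
    (hfpos : ∀ x ∈ Set.Ico (0:ℝ) 1, 0 < f x)
    (hfasym : Filter.Tendsto (fun x => f x * (1 - x) ^ (-(3 / n)))
      (nhdsWithin 1 (Set.Iio 1)) (nhds C₅)) :
    ¬ ∃ g : ℝ → ℝ,
      ContDiffOn ℝ 1 g (Set.Icc 0 1) ∧
      ContDiffOn ℝ 3 g (Set.Ioo 0 1) ∧
      (∀ x ∈ Set.Ioo (0:ℝ) 1,
        (n - 1) * x * g x + f x ^ n * deriv (deriv (deriv g)) x = 0) ∧
      g 1 = 0 ∧
      derivWithin g (Set.Icc 0 1) 1 = -θ ∧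
      derivWithin g (Set.Icc 0 1) 0 = 0 :=
  no_correction_profile_large_n_general n hn θ hθ C₅ hC₅ f hfpos hfasym
end

section
/- Let n > 0, c ∈ ℝ, and let f : [0,1) → (0,∞) be continuous with ∫_0^1 x (1−x)² (1+x) f(x)^(−n) dx < ∞. Then there exists exactly one function v : [0,1] → ℝ that is continuously differentiable on [0,1], three times continuously differentiable on [0,1), and satisfies f(x)^n · v'''(x) = c · x · (1 − x²) for all x ∈ (0,1), v(1) = 0, v'(1) = 0, and v'(0) = 0. -/
/-!
Dividing by `fⁿ > 0` turns the equation into `v''' = g` with `g = c x (1 - x²) f⁻ⁿ`, and the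
hypothesis says that `(1 - x) g` is integrable. The derivative `w = v'` must solve `w'' = g`,
`w(0) = w(1) = 0`; in the Green's function representation of `w` the weight `1 - t` is exactly
what makes `(1 - x) ∫₀ˣ t g → 0` as `x → 1` (dominated convergence), so `w` is continuous on
`[0, 1]` and `v = ∫₁ˣ w` is a solution. For uniqueness, the derivative of the difference of two
solutions vanishes at both ends and has zero second derivative, so it vanishes by Rolle's theorem.
-/

open Set Filter MeasureTheory
open scoped Topology

section Calculus

variable {E : Type*} [NormedAddCommGroup E] [NormedSpace ℝ E]

theorem contDiffOn_succ_of_hasDerivWithinAt {f f' : ℝ → E} {s : Set ℝ} {n : ℕ}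
    (hs : UniqueDiffOn ℝ s) (hf : ∀ x ∈ s, HasDerivWithinAt f (f' x) s x)
    (hf' : ContDiffOn ℝ n f' s) : ContDiffOn ℝ (n + 1) f s := by
  rw [contDiffOn_succ_iff_derivWithin hs]
  exact ⟨fun x hx => (hf x hx).differentiableWithinAt, by simp,
    hf'.congr fun x hx => (hf x hx).derivWithin (hs x hx)⟩

variable [CompleteSpace E]

theorem hasDerivAt_integral_of_continuousOn {φ : ℝ → E} {s : Set ℝ} {a x : ℝ}
    (hφ : ContinuousOn φ s) (hsm : MeasurableSet s) (hs : s ∈ 𝓝 x) (hax : uIcc a x ⊆ s) :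
    HasDerivAt (fun u => ∫ t in a..u, φ t) (φ x) x :=
  intervalIntegral.integral_hasDerivAt_right (hφ.mono hax).intervalIntegrable
    ⟨s, hs, hφ.aestronglyMeasurable hsm⟩ (hφ.continuousAt hs)

theorem hasDerivWithinAt_integral_Icc {φ : ℝ → E} {a b c x : ℝ}
    (hφ : ContinuousOn φ (Icc a b)) (hc : c ∈ Icc a b) (hx : x ∈ Icc a b) :
    HasDerivWithinAt (fun u => ∫ t in c..u, φ t) (φ x) (Icc a b) x :=
  have : Fact (x ∈ Icc a b) := ⟨hx⟩
  intervalIntegral.integral_hasDerivWithinAt_right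
    (hφ.mono (uIcc_subset_Icc hc hx)).intervalIntegrable
    (hφ.stronglyMeasurableAtFilter_nhdsWithin measurableSet_Icc x) (hφ x hx)

end Calculus

theorem constant_of_deriv_zero_Ioo {f : ℝ → ℝ} {a b : ℝ} (hf : ContinuousOn f (Icc a b))
    (hfd : DifferentiableOn ℝ f (Ioo a b)) (hf' : EqOn (deriv f) 0 (Ioo a b)) :
    ∀ x ∈ Icc a b, f x = f a := by
  rintro x ⟨hax, hxb⟩
  rcases hax.eq_or_lt with rfl | hax
  · rfl
  obtain ⟨c, hc, hslope⟩ := exists_deriv_eq_slope f hax (hf.mono (Icc_subset_Icc_right hxb))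
    (hfd.mono (Ioo_subset_Ioo_right hxb))
  rw [hf' ⟨hc.1, hc.2.trans_le hxb⟩, Pi.zero_apply, eq_comm, div_eq_zero_iff, sub_eq_zero,
    sub_eq_zero] at hslope
  exact hslope.resolve_right hax.ne'

theorem eqOn_zero_of_deriv_deriv_eq_zero {P : ℝ → ℝ} {a b : ℝ} (hab : a < b)
    (hP : ContinuousOn P (Icc a b)) (hPd : DifferentiableOn ℝ P (Ioo a b))
    (hP'd : DifferentiableOn ℝ (deriv P) (Ioo a b)) (hP'' : EqOn (deriv (deriv P)) 0 (Ioo a b))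
    (ha : P a = 0) (hb : P b = 0) : EqOn P 0 (Icc a b) := by
  obtain ⟨ξ, hξ, hP'ξ⟩ := exists_deriv_eq_zero hab hP (ha.trans hb.symm)
  have hP' : EqOn (deriv P) 0 (Ioo a b) := fun x hx =>
    (isOpen_Ioo.is_const_of_deriv_eq_zero isPreconnected_Ioo hP'd hP'' hx hξ).trans hP'ξ
  intro x hx
  rw [constant_of_deriv_zero_Ioo hP hPd hP' x hx, ha, Pi.zero_apply]

theorem eqOn_zero_of_deriv_deriv_deriv_eq_zero {d : ℝ → ℝ} {a b : ℝ} (hab : a < b)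
    (h1 : ContDiffOn ℝ 1 d (Icc a b)) (h3 : ContDiffOn ℝ 3 d (Ioo a b))
    (hd''' : EqOn (deriv (deriv (deriv d))) 0 (Ioo a b)) (hb : d b = 0)
    (hd'a : derivWithin d (Icc a b) a = 0) (hd'b : derivWithin d (Icc a b) b = 0) :
    EqOn d 0 (Icc a b) := by
  have hd' : EqOn (derivWithin d (Icc a b)) (deriv d) (Ioo a b) := fun x hx =>
    derivWithin_of_mem_nhds (Icc_mem_nhds hx.1 hx.2)
  rw [show (3 : WithTop ℕ∞) = 1 + 1 + 1 by norm_num,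
    contDiffOn_succ_iff_deriv_of_isOpen isOpen_Ioo,
    contDiffOn_succ_iff_deriv_of_isOpen isOpen_Ioo] at h3
  obtain ⟨-, -, hd'd, -, hd''⟩ := h3
  have hP := eqOn_zero_of_deriv_deriv_eq_zero hab
    (h1.continuousOn_derivWithin (uniqueDiffOn_Icc hab) le_rfl) (hd'd.congr hd')
    ((hd''.differentiableOn one_ne_zero).congr (hd'.deriv isOpen_Ioo))
    (((hd'.deriv isOpen_Ioo).deriv isOpen_Ioo).trans hd''') hd'a hd'b
  have hconst := constant_of_derivWithin_zero (h1.differentiableOn one_ne_zero)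
    fun y hy => hP ⟨hy.1, hy.2.le⟩
  intro x hx
  rw [hconst x hx, ← hconst b (right_mem_Icc.2 hab.le), hb, Pi.zero_apply]

theorem tendsto_sub_mul_integral_nhdsLT {φ : ℝ → ℝ} {a b : ℝ} (hab : a < b)
    (hφ : IntervalIntegrable (fun t => (b - t) * φ t) volume a b) :
    Tendsto (fun x => (b - x) * ∫ t in a..x, φ t) (𝓝[<] b) (𝓝 0) := by
  set μ := volume.restrict (Ioo a b)
  have hφi : Integrable (fun t => (b - t) * φ t) μ := hφ.1.mono_set Ioo_subset_Ioc_self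
  have hφm : AEStronglyMeasurable φ μ := by
    have : AEStronglyMeasurable (fun t => (b - t)⁻¹ * ((b - t) * φ t)) μ :=
      (measurable_id.const_sub b).inv.aestronglyMeasurable.mul hφi.aestronglyMeasurable
    refine this.congr ?_
    filter_upwards [ae_restrict_mem measurableSet_Ioo] with t ht
    exact inv_mul_cancel_left₀ (sub_pos.2 ht.2).ne' _
  set Φ : ℝ → ℝ → ℝ := fun x => (Ioc a x).indicator fun t => (b - x) * φ t
  have hlim : Tendsto (fun x => ∫ t, Φ x t ∂μ) (𝓝[<] b) (𝓝 (∫ _, 0 ∂μ)) := by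
    refine tendsto_integral_filter_of_dominated_convergence (fun t => |(b - t) * φ t|)
      (Eventually.of_forall fun x => ((aestronglyMeasurable_const.mul hφm).indicator
        measurableSet_Ioc)) ?_ hφi.abs ?_
    -- for `t ≤ x < b` the weight `b - x` is at most `b - t`
    · filter_upwards [self_mem_nhdsWithin] with x (hx : x < b)
      filter_upwards [ae_restrict_mem measurableSet_Ioo] with t ht
      simp only [Φ]
      by_cases htx : t ∈ Ioc a x
      · rw [indicator_of_mem htx, Real.norm_eq_abs, abs_mul, abs_mul,
          abs_of_pos (sub_pos.2 hx), abs_of_pos (sub_pos.2 ht.2)]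
        gcongr
        exact htx.2
      · rw [indicator_of_notMem htx, norm_zero]
        positivity
    · filter_upwards [ae_restrict_mem measurableSet_Ioo] with t ht
      have hev : ∀ᶠ x in 𝓝[<] b, Φ x t = (b - x) * φ t := by
        filter_upwards [Ioo_mem_nhdsLT ht.2] with x hx
        exact indicator_of_mem (show t ∈ Ioc a x from ⟨ht.1, hx.1.le⟩) _
      have : Tendsto (fun x => (b - x) * φ t) (𝓝[<] b) (𝓝 ((b - b) * φ t)) :=
        ((continuous_const.sub continuous_id).mul continuous_const).continuousWithinAt
      rw [sub_self, zero_mul] at this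
      exact this.congr' (hev.mono fun x hx => hx.symm)
  rw [integral_zero] at hlim
  refine hlim.congr' ?_
  filter_upwards [Ioo_mem_nhdsLT hab] with x hx
  simp only [Φ]
  rw [integral_indicator measurableSet_Ioc, Measure.restrict_restrict measurableSet_Ioc,
    inter_eq_left.2 (Ioc_subset_Ioo_right hx.2), integral_const_mul,
    intervalIntegral.integral_of_le hx.1.le]

structure SolvesBVP (g v : ℝ → ℝ) : Prop where
  contDiffOn_Icc : ContDiffOn ℝ 1 v (Icc 0 1)
  contDiffOn_Ico : ContDiffOn ℝ 3 v (Ico 0 1)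
  deriv_deriv_deriv : ∀ x ∈ Ioo (0:ℝ) 1, deriv (deriv (deriv v)) x = g x
  apply_one : v 1 = 0
  derivWithin_one : derivWithin v (Icc 0 1) 1 = 0
  derivWithin_zero : derivWithin v (Icc 0 1) 0 = 0

theorem SolvesBVP.eqOn {g u v : ℝ → ℝ} (hu : SolvesBVP g u) (hv : SolvesBVP g v) :
    EqOn u v (Icc 0 1) := by
  have hud := hu.contDiffOn_Icc.differentiableOn one_ne_zero
  have hvd := hv.contDiffOn_Icc.differentiableOn one_ne_zero
  have hu3 := hu.contDiffOn_Ico.mono Ioo_subset_Ico_self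
  have hv3 := hv.contDiffOn_Ico.mono Ioo_subset_Ico_self
  have hd''' : EqOn (deriv (deriv (deriv (u - v)))) 0 (Ioo 0 1) := by
    intro x hx
    have h := iteratedDeriv_sub (hu3.contDiffAt (Ioo_mem_nhds hx.1 hx.2))
      (hv3.contDiffAt (Ioo_mem_nhds hx.1 hx.2))
    simp only [iteratedDeriv_eq_iterate, Function.iterate_succ, Function.iterate_zero,
      Function.comp_apply, id] at h
    rw [h, hu.deriv_deriv_deriv x hx, hv.deriv_deriv_deriv x hx, sub_self, Pi.zero_apply]
  have hd := eqOn_zero_of_deriv_deriv_deriv_eq_zero zero_lt_one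
    (hu.contDiffOn_Icc.sub hv.contDiffOn_Icc) (hu3.sub hv3) hd'''
    (by rw [hu.apply_one, hv.apply_one, sub_self])
    (by rw [derivWithin_fun_sub (hud 0 (left_mem_Icc.2 zero_le_one))
      (hvd 0 (left_mem_Icc.2 zero_le_one)), hu.derivWithin_zero, hv.derivWithin_zero, sub_self])
    (by rw [derivWithin_fun_sub (hud 1 (right_mem_Icc.2 zero_le_one))
      (hvd 1 (right_mem_Icc.2 zero_le_one)), hu.derivWithin_one, hv.derivWithin_one, sub_self])
  exact fun x hx => sub_eq_zero.1 (hd hx)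

section GreenFunction

variable {g : ℝ → ℝ}

-- the solution of `w'' = g`, `w 0 = w 1 = 0`, written with the Green's function of `[0, 1]`
noncomputable def dirichletGreen (g : ℝ → ℝ) (x : ℝ) : ℝ :=
  x * ((∫ t in (0:ℝ)..x, (1 - t) * g t) - ∫ t in (0:ℝ)..1, (1 - t) * g t) -
    (1 - x) * ∫ t in (0:ℝ)..x, t * g t

@[simp] theorem dirichletGreen_zero : dirichletGreen g 0 = 0 := by
  simp [dirichletGreen]

@[simp] theorem dirichletGreen_one : dirichletGreen g 1 = 0 := by
  simp [dirichletGreen]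

theorem exists_hasDerivAt_dirichletGreen (hg : ContinuousOn g (Iio 1)) :
    ∃ w' : ℝ → ℝ, (∀ x ∈ Iio (1:ℝ), HasDerivAt (dirichletGreen g) (w' x) x) ∧
      ∀ x ∈ Iio (1:ℝ), HasDerivAt w' (g x) x := by
  set A : ℝ → ℝ := fun x => ∫ t in (0:ℝ)..x, (1 - t) * g t
  set B : ℝ → ℝ := fun x => ∫ t in (0:ℝ)..x, t * g t
  have hsub : ∀ x ∈ Iio (1:ℝ), uIcc 0 x ⊆ Iio 1 := fun x hx t ht =>
    ht.2.trans_lt (sup_lt_iff.2 ⟨zero_lt_one, hx⟩)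
  have hA : ∀ x ∈ Iio (1:ℝ), HasDerivAt A ((1 - x) * g x) x := fun x hx =>
    hasDerivAt_integral_of_continuousOn ((continuousOn_const.sub continuousOn_id).mul hg)
      measurableSet_Iio (Iio_mem_nhds hx) (hsub x hx)
  have hB : ∀ x ∈ Iio (1:ℝ), HasDerivAt B (x * g x) x := fun x hx =>
    hasDerivAt_integral_of_continuousOn (continuousOn_id.mul hg)
      measurableSet_Iio (Iio_mem_nhds hx) (hsub x hx)
  refine ⟨fun x => A x - A 1 + B x, fun x hx => ?_, fun x hx => ?_⟩
  · refine (((hasDerivAt_id' x).mul ((hA x hx).sub_const (A 1))).sub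
      (((hasDerivAt_id' x).const_sub 1).mul (hB x hx))).congr_deriv ?_
    ring
  · refine (((hA x hx).sub_const (A 1)).add (hB x hx)).congr_deriv ?_
    ring

theorem continuousWithinAt_dirichletGreen_one
    (hψ : IntervalIntegrable (fun t => (1 - t) * g t) volume 0 1) :
    ContinuousWithinAt (dirichletGreen g) (Iio 1) 1 := by
  have hA : ContinuousWithinAt (fun x => ∫ t in (0:ℝ)..x, (1 - t) * g t) (Iio 1) 1 := by
    have := intervalIntegral.continuousOn_primitive_interval' hψ left_mem_uIcc 1 right_mem_uIcc
    rw [uIcc_of_le zero_le_one] at this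
    exact this.mono_of_mem_nhdsWithin (Icc_mem_nhdsLT zero_lt_one)
  have hA0 := (continuousWithinAt_id.mul (hA.sub (continuousWithinAt_const
    (b := ∫ t in (0:ℝ)..1, (1 - t) * g t)))).tendsto
  have hB0 := tendsto_sub_mul_integral_nhdsLT (φ := fun t => t * g t) zero_lt_one
    (by simpa only [id, mul_left_comm] using hψ.continuousOn_mul continuousOn_id)
  rw [Pi.mul_apply, Pi.sub_apply, sub_self, mul_zero] at hA0
  rw [ContinuousWithinAt, dirichletGreen_one, ← sub_zero 0]
  exact hA0.sub hB0

end GreenFunction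

theorem exists_solvesBVP_of_continuousOn_Iio {g : ℝ → ℝ} (hg : ContinuousOn g (Iio 1))
    (hψ : IntervalIntegrable (fun t => (1 - t) * g t) volume 0 1) : ∃ v, SolvesBVP g v := by
  set w := dirichletGreen g
  obtain ⟨w', hw, hw'⟩ := exists_hasDerivAt_dirichletGreen hg
  have hwc : ContinuousOn w (Iic 1) := by
    intro x hx
    rcases (show x ≤ 1 from hx).eq_or_lt with rfl | hx
    · exact continuousWithinAt_Iio_iff_Iic.1 (continuousWithinAt_dirichletGreen_one hψ)
    · exact (hw x hx).continuousAt.continuousWithinAt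
  set v : ℝ → ℝ := fun x => ∫ t in (1:ℝ)..x, w t
  have hv : ∀ x ∈ Iio (1:ℝ), HasDerivAt v (w x) x := fun x hx =>
    hasDerivAt_integral_of_continuousOn hwc measurableSet_Iic (Iic_mem_nhds hx)
      fun t ht => ht.2.trans (sup_le le_rfl hx.le)
  have hvIcc : ∀ x ∈ Icc (0:ℝ) 1, HasDerivWithinAt v (w x) (Icc 0 1) x := fun x hx =>
    hasDerivWithinAt_integral_Icc (hwc.mono Icc_subset_Iic_self) (right_mem_Icc.2 zero_le_one) hx
  have hv3 : ContDiffOn ℝ 3 v (Iio 1) :=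
    contDiffOn_succ_of_hasDerivWithinAt (n := 2) isOpen_Iio.uniqueDiffOn
      (fun x hx => (hv x hx).hasDerivWithinAt) <|
    contDiffOn_succ_of_hasDerivWithinAt (n := 1) isOpen_Iio.uniqueDiffOn
      (fun x hx => (hw x hx).hasDerivWithinAt) <|
    contDiffOn_succ_of_hasDerivWithinAt (n := 0) isOpen_Iio.uniqueDiffOn
      (fun x hx => (hw' x hx).hasDerivWithinAt) (contDiffOn_zero.2 hg)
  have hvD : ∀ x ∈ Icc (0:ℝ) 1, derivWithin v (Icc 0 1) x = w x := fun x hx =>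
    (hvIcc x hx).derivWithin (uniqueDiffOn_Icc zero_lt_one x hx)
  refine ⟨v, contDiffOn_succ_of_hasDerivWithinAt (n := 0) (uniqueDiffOn_Icc zero_lt_one) hvIcc
    (contDiffOn_zero.2 (hwc.mono Icc_subset_Iic_self)), hv3.mono Ico_subset_Iio_self,
    fun x hx => ?_, intervalIntegral.integral_same,
    (hvD 1 (right_mem_Icc.2 zero_le_one)).trans dirichletGreen_one,
    (hvD 0 (left_mem_Icc.2 zero_le_one)).trans dirichletGreen_zero⟩
  have hv' : EqOn (deriv v) w (Iio 1) := fun y hy => (hv y hy).deriv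
  have hw'' : EqOn (deriv w) w' (Iio 1) := fun y hy => (hw y hy).deriv
  rw [((hv'.deriv isOpen_Iio).trans hw'').deriv isOpen_Iio hx.2]
  exact (hw' x hx.2).deriv

theorem exists_solvesBVP {g : ℝ → ℝ} (hg : ContinuousOn g (Ico 0 1))
    (hψ : IntervalIntegrable (fun t => (1 - t) * g t) volume 0 1) : ∃ v, SolvesBVP g v := by
  -- extending `g` to the left by `g 0` turns `[0, 1)` into the open set `(-∞, 1)`
  have hext : ContinuousOn (fun x => g (max x 0)) (Iio 1) :=
    hg.comp (continuous_id.max continuous_const).continuousOn fun x hx =>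
      ⟨le_max_right x 0, max_lt hx zero_lt_one⟩
  have hψ' : IntervalIntegrable (fun t => (1 - t) * g (max t 0)) volume 0 1 := by
    refine hψ.congr fun t ht => ?_
    rw [uIoc_of_le zero_le_one] at ht
    rw [max_eq_left ht.1.le]
  obtain ⟨v, hv⟩ := exists_solvesBVP_of_continuousOn_Iio hext hψ'
  refine ⟨v, { hv with deriv_deriv_deriv := fun x hx => ?_ }⟩
  rw [hv.deriv_deriv_deriv x hx, max_eq_left hx.1.le]

theorem auxiliary_problem_v_unique_general
    (n : ℝ) (c : ℝ)
    (f : ℝ → ℝ) (hfc : ContinuousOn f (Set.Ico 0 1))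
    (hfpos : ∀ x ∈ Set.Ico (0:ℝ) 1, 0 < f x)
    (hint : IntervalIntegrable (fun x => x * (1 - x) ^ 2 * (1 + x) * f x ^ (-n))
      MeasureTheory.volume 0 1) :
    ∃ v : ℝ → ℝ,
      (ContDiffOn ℝ 1 v (Set.Icc 0 1) ∧
        ContDiffOn ℝ 3 v (Set.Ico 0 1) ∧
        (∀ x ∈ Set.Ioo (0:ℝ) 1, f x ^ n * deriv (deriv (deriv v)) x = c * x * (1 - x ^ 2)) ∧
        v 1 = 0 ∧
        derivWithin v (Set.Icc 0 1) 1 = 0 ∧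
        derivWithin v (Set.Icc 0 1) 0 = 0) ∧
      ∀ v' : ℝ → ℝ,
        (ContDiffOn ℝ 1 v' (Set.Icc 0 1) ∧
          ContDiffOn ℝ 3 v' (Set.Ico 0 1) ∧
          (∀ x ∈ Set.Ioo (0:ℝ) 1, f x ^ n * deriv (deriv (deriv v')) x = c * x * (1 - x ^ 2)) ∧
          v' 1 = 0 ∧
          derivWithin v' (Set.Icc 0 1) 1 = 0 ∧
          derivWithin v' (Set.Icc 0 1) 0 = 0) →
        ∀ x ∈ Set.Icc (0:ℝ) 1, v' x = v x := by
  set g : ℝ → ℝ := fun x => c * x * (1 - x ^ 2) * f x ^ (-n)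
  have hode : ∀ x ∈ Ioo (0:ℝ) 1, ∀ y : ℝ, f x ^ n * y = c * x * (1 - x ^ 2) ↔ y = g x := by
    intro x hx y
    have hfx := hfpos x ⟨hx.1.le, hx.2⟩
    simp only [g]
    rw [Real.rpow_neg hfx.le, eq_mul_inv_iff_mul_eq₀ (Real.rpow_pos_of_pos hfx n).ne', mul_comm]
  have hg : ContinuousOn g (Ico 0 1) :=
    (Continuous.continuousOn (by fun_prop)).mul
      (hfc.rpow_const fun x hx => Or.inl (hfpos x hx).ne')
  have hψ : IntervalIntegrable (fun t => (1 - t) * g t) volume 0 1 := by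
    convert hint.const_mul c using 2 with t
    ring
  obtain ⟨v, hv⟩ := exists_solvesBVP hg hψ
  refine ⟨v, ⟨hv.1, hv.2, fun x hx => (hode x hx _).2 (hv.3 x hx), hv.4, hv.5, hv.6⟩, ?_⟩
  rintro u ⟨hu1, hu3, hu, hu1', hu'1, hu'0⟩ x hx
  exact SolvesBVP.eqOn ⟨hu1, hu3, fun y hy => (hode y hy _).1 (hu y hy), hu1', hu'1, hu'0⟩ hv hx

/-- Unique solvability of the auxiliary problem (problem_v) for weak contact-line friction:
if `n > 0`, `f > 0` is continuous on `[0,1)` and `∫₀¹ x(1−x)²(1+x) f^{−n} dx < ∞`, then there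
is exactly one `v`, continuously differentiable on `[0,1]` and three times continuously
differentiable on `[0,1)`, with `fⁿ·v''' = c·x·(1 − x²)` on `(0,1)`, `v(1) = 0`,
`v'(1) = 0`, and `v'(0) = 0`. -/
theorem auxiliary_problem_v_unique
    (n : ℝ) (hn : 0 < n) (c : ℝ)
    (f : ℝ → ℝ) (hfc : ContinuousOn f (Set.Ico 0 1))
    (hfpos : ∀ x ∈ Set.Ico (0:ℝ) 1, 0 < f x)
    (hint : IntervalIntegrable (fun x => x * (1 - x) ^ 2 * (1 + x) * f x ^ (-n))
      MeasureTheory.volume 0 1) :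
    ∃ v : ℝ → ℝ,
      (ContDiffOn ℝ 1 v (Set.Icc 0 1) ∧
        ContDiffOn ℝ 3 v (Set.Ico 0 1) ∧
        (∀ x ∈ Set.Ioo (0:ℝ) 1, f x ^ n * deriv (deriv (deriv v)) x = c * x * (1 - x ^ 2)) ∧
        v 1 = 0 ∧
        derivWithin v (Set.Icc 0 1) 1 = 0 ∧
        derivWithin v (Set.Icc 0 1) 0 = 0) ∧
      ∀ v' : ℝ → ℝ,
        (ContDiffOn ℝ 1 v' (Set.Icc 0 1) ∧
          ContDiffOn ℝ 3 v' (Set.Ico 0 1) ∧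
          (∀ x ∈ Set.Ioo (0:ℝ) 1, f x ^ n * deriv (deriv (deriv v')) x = c * x * (1 - x ^ 2)) ∧
          v' 1 = 0 ∧
          derivWithin v' (Set.Icc 0 1) 1 = 0 ∧
          derivWithin v' (Set.Icc 0 1) 0 = 0) →
        ∀ x ∈ Set.Icc (0:ℝ) 1, v' x = v x :=
  auxiliary_problem_v_unique_general n c f hfc hfpos hint
end
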